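/- arXiv:2603.28636 — 12 statements merged into one kernel-verified Lean document; each statement's English description precedes it below -/
import Mathlib

section
/- For every positive integer m, f(m) = min(m, ⌈2√m⌉). -/
/-- The matching property: every set `A` of `m` positive integers and every real `x`
admit `r` disjoint pairs `(cᵢ, bᵢ)` with `cᵢ ∈ A` distinct, `bᵢ` distinct integers in
`(x, x + 2 * max A)`, and `cᵢ ∣ bᵢ`. -/
def MatchProp (m r : ℕ) : Prop :=
  ∀ A : Finset ℕ, A.card = m → (∀ a ∈ A, 0 < a) → ∀ x : ℝ,
    ∃ c : Fin r → ℕ, ∃ b : Fin r → ℤ,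
      Function.Injective c ∧ Function.Injective b ∧
      ∀ i : Fin r, c i ∈ A ∧ (c i : ℤ) ∣ b i ∧
        x < (b i : ℝ) ∧ (b i : ℝ) < x + 2 * (A.sup id : ℕ)

/-- `f m` is the largest `r` such that `MatchProp m r` holds. -/
noncomputable def f (m : ℕ) : ℕ := sSup {r : ℕ | MatchProp m r}

/-!
Lower bound. By Hall's theorem with `m - min m ⌈2√m⌉` spare vertices, it suffices that any
`s` elements of `A`, all at most `L = max A`, have at least `min s ⌈2√s⌉` multiples in the
window `(x, x + 2L)`. Split the window at `y = ⌊x + L⌋`: each `a` gives the pair formed by its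
largest multiple `≤ y` and the next one, and distinct `a` give distinct pairs, so `s ≤ |U| |V|`
where `U`, `V` are the multiples below and above `y`; hence `4s ≤ (|U| + |V|)²`. The pair of
`a = L` leaves the window only when `x + L` is an integer multiple of `L`; then the other
elements are paired around `x + L`, and a reflection through `x + L` excludes the extremal case.

Upper bound. Write `⌈2√m⌉ = p + q` with `m ≤ pq`. The numbers `a_k = L - k·m!` are pairwise
coprime, so by the Chinese remainder theorem the window can be placed so that the only multiples
of `a_{iq+j}` in it are some `u_i` and `u_i + a_{iq+j} = v_j`. Every matching then lands in the
`p + q` integers `u_i`, `v_j`.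
-/

open Finset

noncomputable def sqrtBound (m : ℕ) : ℕ := min m ⌈2 * √m⌉₊

theorem ceil_two_sqrt_le_iff {s n : ℕ} : ⌈2 * √s⌉₊ ≤ n ↔ 4 * s ≤ n ^ 2 := by
  rw [Nat.ceil_le, ← le_div_iff₀' two_pos, Real.sqrt_le_left (by positivity), div_pow,
    le_div_iff₀ (by norm_num), mul_comm]
  norm_cast

theorem sqrtBound_le_of_le_mul {s p q : ℕ} (h : s ≤ p * q) : sqrtBound s ≤ p + q :=
  min_le_of_right_le <| ceil_two_sqrt_le_iff.2 <| by
    zify at h ⊢; nlinarith [sq_nonneg ((p : ℤ) - q)]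

theorem sqrtBound_succ_le_add {t p q : ℕ} (hp : 1 ≤ p) (ht : t ≤ p * q)
    (hq : p * q ≤ t → q ≤ 1) : sqrtBound (t + 1) ≤ p + q := by
  rcases ht.lt_or_eq with ht | rfl
  · exact sqrtBound_le_of_le_mul ht
  · have := hq le_rfl
    refine (min_le_left _ _).trans ?_
    interval_cases q <;> omega

theorem le_sqrtBound_add_sub {s m : ℕ} (h : s ≤ m) : s ≤ sqrtBound s + (m - sqrtBound m) := by
  unfold sqrtBound
  set c := ⌈2 * √s⌉₊
  rcases le_or_gt s c with hs | hs
  · omega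
  obtain ⟨d, rfl⟩ := Nat.exists_eq_add_of_le h
  have hc : 4 * s ≤ c ^ 2 := ceil_two_sqrt_le_iff.1 le_rfl
  have hc₂ : 2 ≤ c := by nlinarith
  have : ⌈2 * √(s + d : ℕ)⌉₊ ≤ c + d := ceil_two_sqrt_le_iff.2 <| by nlinarith
  omega

theorem le_half_mul_half {m n : ℕ} (h : 4 * m ≤ n ^ 2) : m ≤ (n + 1) / 2 * (n / 2) := by
  obtain ⟨k, rfl | rfl⟩ := Nat.even_or_odd' n
  · rw [show (2 * k + 1) / 2 = k by omega, show 2 * k / 2 = k by omega]; nlinarith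
  · rw [show (2 * k + 1 + 1) / 2 = k + 1 by omega, show (2 * k + 1) / 2 = k by omega]; nlinarith

noncomputable def window (x : ℝ) (L : ℕ) : Finset ℤ := Ioo ⌊x⌋ ⌈x + 2 * L⌉

theorem mem_window {x : ℝ} {L : ℕ} {b : ℤ} : b ∈ window x L ↔ x < b ∧ b < x + 2 * L := by
  simp [window, Int.floor_lt, Int.lt_ceil]

noncomputable def neighbors (x : ℝ) (L : ℕ) (S : Finset ℕ) : Finset ℤ :=
  S.biUnion fun a => (window x L).filter ((a : ℤ) ∣ ·)

theorem mem_neighbors {x : ℝ} {L : ℕ} {S : Finset ℕ} {b : ℤ} :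
    b ∈ neighbors x L S ↔ (x < b ∧ b < x + 2 * L) ∧ ∃ a ∈ S, (a : ℤ) ∣ b := by
  simp only [neighbors, mem_biUnion, mem_filter, mem_window]
  tauto

theorem card_filter_le_add_card_filter_lt (N : Finset ℤ) (y : ℤ) :
    #(N.filter (· ≤ y)) + #(N.filter (y < ·)) = #N := by
  simpa only [not_le] using N.card_filter_add_card_filter_not (· ≤ y)

def straddle (y : ℤ) (a : ℕ) : ℤ × ℤ := (y / a * a, y / a * a + a)

theorem straddle_injective (y : ℤ) : Function.Injective (straddle y) := fun a b hab => by
  simp only [straddle, Prod.mk.injEq] at hab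
  omega

section Straddle

variable {N : Finset ℤ} {y : ℤ} {T : Finset ℕ}

theorem straddle_mem_product (hT : ∀ a ∈ T, 0 < a ∧ y / a * a ∈ N ∧ y / a * a + a ∈ N) {a : ℕ}
    (ha : a ∈ T) : straddle y a ∈ N.filter (· ≤ y) ×ˢ N.filter (y < ·) := by
  obtain ⟨ha₀, hu, hv⟩ := hT a ha
  have hle := Int.ediv_mul_le y (b := a) (by positivity)
  have hlt := Int.lt_ediv_add_one_mul_self y (b := a) (by positivity)
  simp only [straddle, mem_product, mem_filter]
  exact ⟨⟨hu, hle⟩, hv, by linarith⟩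

theorem card_le_card_mul_card_of_straddle
    (hT : ∀ a ∈ T, 0 < a ∧ y / a * a ∈ N ∧ y / a * a + a ∈ N) :
    #T ≤ #(N.filter (· ≤ y)) * #(N.filter (y < ·)) := by
  rw [← card_product]
  exact card_le_card_of_injOn _ (fun _ ha => straddle_mem_product hT ha)
    (straddle_injective y).injOn

theorem card_filter_lt_le_one_of_straddle
    (hT : ∀ a ∈ T, 0 < a ∧ y / a * a ∈ N ∧ y / a * a + a ∈ N) (hy : y ∈ N)
    (hsymm : ∀ a ∈ T, (a : ℤ) ∣ y → y - a ∈ N)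
    (hcard : #(N.filter (· ≤ y)) * #(N.filter (y < ·)) ≤ #T) :
    #(N.filter (y < ·)) ≤ 1 := by
  have hsurj : T.image (straddle y) = N.filter (· ≤ y) ×ˢ N.filter (y < ·) :=
    eq_of_subset_of_card_le (image_subset_iff.2 fun _ ha => straddle_mem_product hT ha)
      (by rwa [card_image_of_injective _ (straddle_injective y), card_product])
  have hpair : ∀ u v, u ∈ N → u ≤ y → v ∈ N → y < v →
      ∃ a ∈ T, y / a * a = u ∧ (a : ℤ) = v - u := by
    intro u v hu huy hv hvy
    have : (u, v) ∈ T.image (straddle y) :=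
      hsurj ▸ mem_product.2 ⟨mem_filter.2 ⟨hu, huy⟩, mem_filter.2 ⟨hv, hvy⟩⟩
    obtain ⟨a, ha, h⟩ := mem_image.1 this
    simp only [straddle, Prod.mk.injEq] at h
    exact ⟨a, ha, h.1, by omega⟩
  -- a value `v > y` is hit by `(y, v)`, so `v - y ∣ y` and `2y - v` is a neighbour below `y`
  have hrefl : ∀ v ∈ N, y < v → 2 * y - v ∈ N := by
    intro v hv hvy
    obtain ⟨a, ha, hya, hav⟩ := hpair y v hy le_rfl hv hvy
    have := hsymm a ha (hya ▸ dvd_mul_left _ _)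
    rwa [hav, show y - (v - y) = 2 * y - v by ring] at this
  -- two values `v₁ ≠ v₂` above `y` would make `(2y - v₁, v₂)` and `(2y - v₂, v₁)` pairs of the
  -- same element `v₁ + v₂ - 2y`
  by_contra! h
  obtain ⟨v₁, hv₁, v₂, hv₂, hne⟩ := one_lt_card.1 h
  rw [mem_filter] at hv₁ hv₂
  obtain ⟨a₁, -, hu₁, ha₁⟩ := hpair _ _ (hrefl v₁ hv₁.1 hv₁.2) (by omega) hv₂.1 hv₂.2
  obtain ⟨a₂, -, hu₂, ha₂⟩ := hpair _ _ (hrefl v₂ hv₂.1 hv₂.2) (by omega) hv₁.1 hv₁.2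
  have : a₁ = a₂ := by omega
  subst this
  omega

end Straddle

theorem sqrtBound_card_le_card_neighbors_of_dvd {w : ℤ} {L : ℕ} {S : Finset ℕ}
    (hS : ∀ a ∈ S, 0 < a ∧ a ≤ L) (hL : L ∈ S) (hw : (L : ℤ) ∣ w) :
    sqrtBound #S ≤ #(neighbors (w - L) L S) := by
  set N := neighbors (w - L) L S
  have hN : ∀ b : ℤ, ∀ a ∈ S, (a : ℤ) ∣ b → w - L < b → b < w + L → b ∈ N := by
    intro b a ha hab h₁ h₂
    have h₁' : ((w - L : ℤ) : ℝ) < b := by exact_mod_cast h₁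
    have h₂' : (b : ℝ) < ((w + L : ℤ) : ℝ) := by exact_mod_cast h₂
    push_cast at h₁' h₂'
    exact mem_neighbors.2 ⟨⟨h₁', by linarith⟩, a, ha, hab⟩
  have hT : ∀ a ∈ S.erase L, 0 < a ∧ (a : ℤ) < L := fun a ha => by
    have := hS a (mem_of_mem_erase ha)
    have := ne_of_mem_erase ha
    omega
  have hstraddle : ∀ a ∈ S.erase L, 0 < a ∧ w / a * a ∈ N ∧ w / a * a + a ∈ N := by
    intro a ha
    obtain ⟨ha₀, haL⟩ := hT a ha
    have hle := Int.ediv_mul_le w (b := a) (by positivity)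
    have hlt := Int.lt_ediv_add_one_mul_self w (b := a) (by positivity)
    have haS := mem_of_mem_erase ha
    exact ⟨ha₀, hN _ a haS (dvd_mul_left _ _) (by linarith) (by linarith),
      hN _ a haS (dvd_add (dvd_mul_left _ _) dvd_rfl) (by linarith) (by linarith)⟩
  have hL₀ := (hS L hL).1
  have hwN : w ∈ N := hN w L hL hw (by omega) (by omega)
  have hsymm : ∀ a ∈ S.erase L, (a : ℤ) ∣ w → w - a ∈ N := fun a ha haw => by
    have := hT a ha
    exact hN _ a (mem_of_mem_erase ha) (dvd_sub haw dvd_rfl) (by omega) (by omega)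
  rw [← card_erase_add_one hL, ← card_filter_le_add_card_filter_lt N w]
  exact sqrtBound_succ_le_add (card_pos.2 ⟨w, mem_filter.2 ⟨hwN, le_rfl⟩⟩)
    (card_le_card_mul_card_of_straddle hstraddle)
    (card_filter_lt_le_one_of_straddle hstraddle hwN hsymm)

theorem sqrtBound_card_le_card_neighbors (x : ℝ) {L : ℕ} {S : Finset ℕ}
    (hS : ∀ a ∈ S, 0 < a ∧ a ≤ L) : sqrtBound #S ≤ #(neighbors x L S) := by
  set y : ℤ := ⌊x + L⌋
  have hy₁ : x + L < y + 1 := Int.lt_floor_add_one _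
  have hy₂ : (y : ℝ) ≤ x + L := Int.floor_le _
  have hbounds : ∀ a ∈ S, x < (y / a * a : ℤ) ∧ ((y / a * a : ℤ) : ℝ) ≤ y := by
    intro a ha
    obtain ⟨ha₀, haL⟩ := hS a ha
    have hle : y / a * a ≤ y := Int.ediv_mul_le y (by positivity)
    have hlt : y + 1 - a ≤ y / a * a := by
      have := Int.lt_ediv_add_one_mul_self y (b := a) (by positivity)
      linarith
    generalize y / a * a = u at hle hlt ⊢
    have hlt' : ((y + 1 - a : ℤ) : ℝ) ≤ u := by exact_mod_cast hlt
    have haL' : (a : ℝ) ≤ L := by exact_mod_cast haL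
    push_cast at hlt'
    exact ⟨by linarith, by exact_mod_cast hle⟩
  by_cases hstraddle : ∀ a ∈ S, ((y / a * a + a : ℤ) : ℝ) < x + 2 * L
  · have hT : ∀ a ∈ S, 0 < a ∧ y / a * a ∈ neighbors x L S ∧
        y / a * a + a ∈ neighbors x L S := by
      intro a ha
      obtain ⟨hlo, hhi⟩ := hbounds a ha
      have hv := hstraddle a ha
      obtain ⟨ha₀, haL⟩ := hS a ha
      have haL' : (a : ℝ) ≤ L := by exact_mod_cast haL
      have hdvd : (a : ℤ) ∣ y / a * a := dvd_mul_left _ _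
      generalize y / a * a = u at hlo hhi hv hdvd ⊢
      push_cast at hv
      exact ⟨ha₀, mem_neighbors.2 ⟨⟨hlo, by linarith⟩, a, ha, hdvd⟩,
        mem_neighbors.2 ⟨⟨by push_cast; linarith, by push_cast; linarith⟩, a, ha,
          dvd_add hdvd dvd_rfl⟩⟩
    rw [← card_filter_le_add_card_filter_lt _ y]
    exact sqrtBound_le_of_le_mul (card_le_card_mul_card_of_straddle hT)
  · push Not at hstraddle
    obtain ⟨a, ha, hge⟩ := hstraddle
    obtain ⟨hlo, hhi⟩ := hbounds a ha
    have haL : (a : ℝ) ≤ L := by exact_mod_cast (hS a ha).2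
    have hdvd : (a : ℤ) ∣ y / a * a := dvd_mul_left _ _
    generalize y / a * a = u at hlo hhi hge hdvd
    push_cast at hge
    obtain rfl : a = L := by exact_mod_cast (by linarith : (a : ℝ) = L)
    obtain rfl : u = y := by exact_mod_cast (by linarith : (u : ℝ) = y)
    rw [show x = (y : ℝ) - a by linarith]
    exact sqrtBound_card_le_card_neighbors_of_dvd hS ha hdvd

theorem Finset.card_le_card_biUnion_disjSum {ι α : Type*} [DecidableEq α] {s : Finset ι}
    {t : ι → Finset α} {k : ℕ} (h : ∀ u ⊆ s, #u ≤ #(u.biUnion t) + k) (w : Finset s) :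
    #w ≤ #(w.biUnion fun i => (t i).disjSum (univ : Finset (Fin k))) := by
  rcases w.eq_empty_or_nonempty with rfl | ⟨i₀, hi₀⟩
  · simp
  calc #w = #(w.map (Function.Embedding.subtype _)) := (card_map _).symm
    _ ≤ #((w.map (Function.Embedding.subtype _)).biUnion t) + k :=
      h _ fun i hi => by obtain ⟨j, -, rfl⟩ := mem_map.1 hi; exact j.2
    _ = #(((w.map (Function.Embedding.subtype _)).biUnion t).disjSum univ) := by
      simp [card_disjSum]
    _ ≤ _ := card_le_card fun x hx => by
      rcases x with a | j
      · obtain ⟨i, hi, ha⟩ := mem_biUnion.1 (inl_mem_disjSum.1 hx)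
        obtain ⟨i, hi', rfl⟩ := mem_map.1 hi
        exact mem_biUnion.2 ⟨i, hi', inl_mem_disjSum.2 ha⟩
      · exact mem_biUnion.2 ⟨i₀, hi₀, inr_mem_disjSum.2 (mem_univ j)⟩

theorem Finset.exists_injOn_of_card_le_card_biUnion_add {ι α : Type*} [DecidableEq α]
    [Nonempty α] (s : Finset ι) (t : ι → Finset α) (k : ℕ)
    (h : ∀ u ⊆ s, #u ≤ #(u.biUnion t) + k) :
    ∃ u ⊆ s, #s ≤ #u + k ∧ ∃ g : ι → α, Set.InjOn g u ∧ ∀ i ∈ u, g i ∈ t i := by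
  classical
  -- `k` extra vertices adjacent to everything turn the deficiency into Hall's condition
  obtain ⟨F, hF, hFt⟩ := (all_card_le_biUnion_card_iff_exists_injective
    fun i : s => (t i).disjSum (univ : Finset (Fin k))).1 (card_le_card_biUnion_disjSum h)
  let G : ι → α ⊕ Fin k := fun i => if h : i ∈ s then F ⟨i, h⟩ else .inl (Classical.arbitrary α)
  have hG : ∀ i (h : i ∈ s), G i = F ⟨i, h⟩ := fun i h => dif_pos h
  have hGinj : Set.InjOn G s := fun i hi j hj hij => by
    rw [hG i hi, hG j hj] at hij
    exact congrArg Subtype.val (hF hij)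
  let g : ι → α := fun i => (G i).elim id fun _ => Classical.arbitrary α
  have hGg : ∀ i, (G i).isLeft → G i = .inl (g i) := fun i hi => by
    obtain ⟨a, ha⟩ := Sum.isLeft_iff.1 hi
    simp [g, ha]
  refine ⟨s.filter fun i => (G i).isLeft, filter_subset _ _, ?_, g, ?_, ?_⟩
  · rw [← card_filter_add_card_filter_not (s := s) fun i => (G i).isLeft, add_le_add_iff_left]
    calc #(s.filter fun i => ¬(G i).isLeft) ≤ #(univ.map (Function.Embedding.inr (α := α))) :=
          card_le_card_of_injOn G (fun i hi => by
            obtain ⟨hi, hr⟩ := mem_filter.1 hi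
            obtain ⟨j, hj⟩ := Sum.isRight_iff.1 (Sum.not_isLeft.1 hr)
            simp [hj]) (hGinj.mono fun i hi => (mem_filter.1 hi).1)
      _ = k := by simp
  · intro i hi j hj hij
    exact hGinj (mem_filter.1 hi).1 (mem_filter.1 hj).1 <| by
      rw [hGg i (mem_filter.1 hi).2, hGg j (mem_filter.1 hj).2, hij]
  · intro i hi
    obtain ⟨hi, hl⟩ := mem_filter.1 hi
    have := hFt ⟨i, hi⟩
    rw [← hG i hi, hGg i hl] at this
    exact inl_mem_disjSum.1 this

theorem matchProp_of_forall_exists_injOn {m r : ℕ}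
    (h : ∀ A : Finset ℕ, #A = m → (∀ a ∈ A, 0 < a) → ∀ x : ℝ, ∃ u ⊆ A, r ≤ #u ∧
      ∃ g : ℕ → ℤ, Set.InjOn g u ∧ ∀ a ∈ u, (a : ℤ) ∣ g a ∧ x < g a ∧ g a < x + 2 * A.sup id) :
    MatchProp m r := by
  intro A hA hpos x
  obtain ⟨u, huA, hru, g, hg, hgu⟩ := h A hA hpos x
  obtain ⟨v, hvu, hv⟩ := exists_subset_card_eq hru
  let e := v.orderIsoOfFin hv
  refine ⟨fun i => e i, fun i => g (e i), fun i j hij => e.injective (Subtype.ext hij),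
    fun i j hij => e.injective (Subtype.ext (hg (hvu (e i).2) (hvu (e j).2) hij)), fun i => ?_⟩
  obtain ⟨hdvd, hlo, hhi⟩ := hgu _ (hvu (e i).2)
  exact ⟨huA (hvu (e i).2), hdvd, hlo, hhi⟩

theorem matchProp_sqrtBound (m : ℕ) : MatchProp m (sqrtBound m) := by
  refine matchProp_of_forall_exists_injOn fun A hA hpos x => ?_
  have hS : ∀ S ⊆ A, ∀ a ∈ S, 0 < a ∧ a ≤ A.sup id := fun S hS a ha =>
    ⟨hpos a (hS ha), le_sup (f := id) (hS ha)⟩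
  obtain ⟨u, huA, hu, g, hg, hgt⟩ := exists_injOn_of_card_le_card_biUnion_add A
    (fun a => (window x (A.sup id)).filter ((a : ℤ) ∣ ·)) (m - sqrtBound m) fun S hSA =>
      (le_sqrtBound_add_sub (hA ▸ card_le_card hSA)).trans <|
        Nat.add_le_add_right (sqrtBound_card_le_card_neighbors x (hS S hSA)) _
  refine ⟨u, huA, ?_, g, hg, fun a ha => ?_⟩
  · have : sqrtBound m ≤ m := min_le_left _ _
    omega
  · obtain ⟨hw, hdvd⟩ := mem_filter.1 (hgt a ha)
    exact ⟨hdvd, mem_window.1 hw⟩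

theorem MatchProp.le_and_le_card_of_forall_mem {m r : ℕ} (h : MatchProp m r) {A : Finset ℕ}
    (hA : #A = m) (hpos : ∀ a ∈ A, 0 < a) {x : ℝ} {B : Finset ℤ}
    (hB : ∀ b : ℤ, x < b → b < x + 2 * A.sup id → ∀ a ∈ A, (a : ℤ) ∣ b → b ∈ B) :
    r ≤ m ∧ r ≤ #B := by
  obtain ⟨c, b, hc, hb, hcb⟩ := h A hA hpos x
  constructor
  · simpa [hA] using card_le_card_of_injOn (s := univ) c (fun i _ => (hcb i).1) hc.injOn
  · have hmaps : ∀ i, b i ∈ B := fun i => by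
      obtain ⟨hcA, hdvd, hlo, hhi⟩ := hcb i
      exact hB _ hlo hhi _ hcA hdvd
    simpa using card_le_card_of_injOn (s := univ) b (fun i _ => hmaps i) hb.injOn

theorem Int.eq_zero_or_eq_of_dvd_of_neg_lt_of_lt_two_mul {a d : ℤ} (h : a ∣ d) (h₁ : -a < d)
    (h₂ : d < 2 * a) : d = 0 ∨ d = a := by
  obtain ⟨e, rfl⟩ := h
  have ha : 0 < a := by linarith
  have he₁ : -1 < e := lt_of_mul_lt_mul_left (by linarith) ha.le
  have he₂ : e < 2 := lt_of_mul_lt_mul_left (by linarith) ha.le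
  interval_cases e <;> simp

-- `a_k = L - k·m!` with `L = 4m·m! + 1`; the slack `4m` keeps `a_k > 2m·m! + k·m!`, which the
-- window estimates in `eq_or_eq_of_dvd_hardElem` need
def hardElem (m k : ℕ) : ℕ := (4 * m - k) * m.factorial + 1

theorem natCast_hardElem {m k : ℕ} (hk : k ≤ 4 * m) :
    (hardElem m k : ℤ) = hardElem m 0 - k * m.factorial := by
  simp only [hardElem, Nat.sub_zero]
  push_cast [Nat.cast_sub hk]
  ring

theorem hardElem_le (m k : ℕ) : hardElem m k ≤ hardElem m 0 :=
  Nat.add_le_add_right (Nat.mul_le_mul_right _ (Nat.sub_le_sub_left (Nat.zero_le k) _)) 1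

theorem hardElem_injOn (m : ℕ) : Set.InjOn (hardElem m) (range m) := fun k hk k' hk' h => by
  simp only [coe_range, Set.mem_Iio, hardElem] at hk hk' h
  have := Nat.eq_of_mul_eq_mul_right m.factorial_pos (Nat.add_right_cancel h)
  omega

theorem pairwise_coprime_hardElem (m : ℕ) :
    (range m : Set ℕ).Pairwise fun k k' => Nat.Coprime (hardElem m k) (hardElem m k') := by
  have key : ∀ k k', k < k' → k' < m → Nat.Coprime (hardElem m k') (hardElem m k) :=
    fun k k' hlt hk' => Nat.coprime_mul_succ (Nat.dvd_factorial (by omega) (by omega))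
  intro k hk k' hk' hne
  simp only [coe_range, Set.mem_Iio] at hk hk'
  rcases hne.lt_or_gt with h | h
  · exact (key k k' h hk').symm
  · exact key k' k h hk

theorem eq_or_eq_of_dvd_hardElem {m q i j : ℕ} {X b : ℤ} (hk : i * q + j < m)
    (hX : (hardElem m (i * q + j) : ℤ) ∣ X + 2 * m * m.factorial + i * q * m.factorial)
    (hb₁ : X < b) (hb₂ : b < X + 2 * hardElem m 0) (hdvd : (hardElem m (i * q + j) : ℤ) ∣ b) :
    b = X + 2 * m * m.factorial + i * q * m.factorial ∨
      b = X + hardElem m 0 + 2 * m * m.factorial - j * m.factorial := by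
  have ha := natCast_hardElem (m := m) (k := i * q + j) (by omega)
  set F := m.factorial
  have hmF : ((i * q + j) * F : ℤ) + (i * q + j) * F ≤ 2 * m * F := by
    have : (i * q + j : ℤ) ≤ m := by exact_mod_cast hk.le
    nlinarith [(Nat.cast_pos.2 m.factorial_pos : (0 : ℤ) < F)]
  have hjF : (0 : ℤ) ≤ j * F := by positivity
  have hiqF : (0 : ℤ) ≤ i * q * F := by positivity
  have h₀ : (hardElem m 0 : ℤ) = 4 * m * F + 1 := by simp [hardElem, F]
  push_cast at ha
  rcases Int.eq_zero_or_eq_of_dvd_of_neg_lt_of_lt_two_mul (dvd_sub hdvd hX)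
    (by linarith) (by linarith) with h | h
  · left; linarith
  · right; linarith

theorem exists_hard_instance (m p q : ℕ) (hmpq : m ≤ p * q) :
    ∃ A : Finset ℕ, #A = m ∧ (∀ a ∈ A, 0 < a) ∧ ∃ x : ℝ, ∃ B : Finset ℤ, #B ≤ p + q ∧
      ∀ b : ℤ, x < b → b < x + 2 * A.sup id → ∀ a ∈ A, (a : ℤ) ∣ b → b ∈ B := by
  set F := m.factorial
  obtain ⟨Y, hY⟩ := Nat.chineseRemainderOfFinset (fun k => 2 * m * F + k / q * q * F) (hardElem m)
    (range m) (fun _ _ => Nat.succ_ne_zero _) (pairwise_coprime_hardElem m)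
  set X : ℤ := -Y
  refine ⟨(range m).image (hardElem m), (card_image_of_injOn (hardElem_injOn m)).trans
    (card_range m), by simp [hardElem], X,
    (range p).image (fun i : ℕ => X + 2 * m * F + i * q * F) ∪
      (range q).image (fun j : ℕ => X + hardElem m 0 + 2 * m * F - j * F),
    (card_union_le _ _).trans (add_le_add (card_image_le.trans (card_range p).le)
      (card_image_le.trans (card_range q).le)), ?_⟩
  intro b hb₁ hb₂ _ hA hdvd
  obtain ⟨k, hk, rfl⟩ := mem_image.1 hA
  rw [mem_range] at hk
  have hsup : ((((range m).image (hardElem m)).sup id : ℕ) : ℝ) ≤ hardElem m 0 := by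
    exact_mod_cast Finset.sup_le fun _ h => by
      obtain ⟨j, -, rfl⟩ := mem_image.1 h
      exact hardElem_le m j
  have hq : 0 < q := Nat.pos_of_ne_zero fun h => by simp [h] at hmpq; omega
  have hX := Nat.modEq_iff_dvd.1 (hY k (mem_range.2 hk))
  obtain ⟨i, j, hkij, hik, hi, hj⟩ : ∃ i j, i * q + j = k ∧ k / q = i ∧ i < p ∧ j < q :=
    ⟨k / q, k % q, Nat.div_add_mod' k q, rfl, Nat.div_lt_of_lt_mul (by nlinarith), Nat.mod_lt _ hq⟩
  rw [hik] at hX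
  subst hkij
  have hb₂' : b < X + 2 * hardElem m 0 := by
    exact_mod_cast (by linarith : (b : ℝ) < X + 2 * hardElem m 0)
  rcases eq_or_eq_of_dvd_hardElem hk (by push_cast at hX; convert hX using 1; ring)
    (by exact_mod_cast hb₁) hb₂' hdvd with rfl | rfl
  · exact mem_union_left _ (mem_image.2 ⟨i, mem_range.2 hi, rfl⟩)
  · exact mem_union_right _ (mem_image.2 ⟨j, mem_range.2 hj, rfl⟩)

theorem erdos_f_eq_general (m : ℕ) :
    f m = min m ⌈2 * Real.sqrt m⌉₊ := by
  refine IsGreatest.csSup_eq ⟨matchProp_sqrtBound m, fun r hr => ?_⟩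
  set n := ⌈2 * √m⌉₊
  obtain ⟨A, hA, hpos, x, B, hB, hmem⟩ :=
    exists_hard_instance m ((n + 1) / 2) (n / 2) (le_half_mul_half (ceil_two_sqrt_le_iff.1 le_rfl))
  obtain ⟨hrm, hrB⟩ := hr.le_and_le_card_of_forall_mem hA hpos hmem
  exact le_min hrm (by omega)

theorem erdos_f_eq (m : ℕ) (hm : 0 < m) :
    f m = min m ⌈2 * Real.sqrt m⌉₊ :=
  erdos_f_eq_general m
end

section
/- For all positive integers s and t, f(st) ≤ s + t. -/
/-!
Take `δ = (st)!`, `N = 2stδ + 1` and `A = {N + nδ : n < st}`. Its elements are pairwise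
coprime: a common divisor of `N + aδ` and `N + bδ` divides `(b - a)δ`, which divides `δ²`
since `0 < b - a < st`, while `N` is coprime to `δ`. Writing `n = sj + i` with `i < s`, the
Chinese remainder theorem gives `M` with `M ≡ iδ` modulo every `N + nδ`. In the window
`(M - N, M + N + 2stδ)` the only multiples of `N + nδ` are `M - iδ` and
`M - iδ + (N + nδ) = M + N + sjδ`; the first depends only on `i`, the second only on `j`, so
all matched integers lie in a set of size at most `s + t`.
-/

open Finset
open scoped Nat

theorem Nat.coprime_add_mul_add_mul {N δ a b : ℕ} (hN : N.Coprime δ) (hab : a ≤ b)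
    (hdvd : b - a ∣ δ) : (N + a * δ).Coprime (N + b * δ) := by
  have hδ : (N + a * δ).Coprime δ := (Nat.coprime_add_mul_right_left N δ a).mpr hN
  have hsplit : N + b * δ = N + a * δ + (b - a) * δ := by
    rw [Nat.sub_mul, add_assoc, Nat.add_sub_of_le (Nat.mul_le_mul_right δ hab)]
  rw [hsplit, Nat.coprime_self_add_right]
  exact (hδ.coprime_dvd_right hdvd).mul_right hδ

theorem Nat.coprime_add_mul_factorial {N Z a b : ℕ} (hN : N.Coprime Z !) (ha : a < Z)
    (hb : b < Z) (hab : a ≠ b) : (N + a * Z !).Coprime (N + b * Z !) := by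
  rcases lt_or_gt_of_ne hab with h | h
  · exact Nat.coprime_add_mul_add_mul hN h.le (Nat.dvd_factorial (by omega) (by omega))
  · exact (Nat.coprime_add_mul_add_mul hN h.le (Nat.dvd_factorial (by omega) (by omega))).symm

theorem Int.eq_or_eq_add_of_dvd_sub {E r b : ℤ} (hdvd : E ∣ b - r) (hlo : r - E < b)
    (hhi : b < r + 2 * E) : b = r ∨ b = r + E := by
  obtain ⟨m, hm⟩ := hdvd
  have hE : 0 < E := by linarith
  have hm_lo : -1 < m := by nlinarith
  have hm_hi : m < 2 := by nlinarith
  interval_cases m <;> [left; right] <;> linarith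

theorem matchProp_zero (m : ℕ) : MatchProp m 0 :=
  fun _ _ _ _ => ⟨Fin.elim0, Fin.elim0, (·.elim0), (·.elim0), (·.elim0)⟩

namespace ErdosUpperBound

variable (s t : ℕ)

def step : ℕ := (s * t) !

def base : ℕ := 2 * (s * t) * step s t + 1

def witnessSet : Finset ℕ := (range (s * t)).image fun n => base s t + n * step s t

theorem step_pos : 0 < step s t := Nat.factorial_pos _

theorem base_coprime_step : (base s t).Coprime (step s t) := by
  simp [base, mul_comm]

theorem card_witnessSet : (witnessSet s t).card = s * t := by
  rw [witnessSet, card_image_of_injective _ fun n n' h => by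
    simpa [(step_pos s t).ne'] using h, card_range]

theorem pos_of_mem_witnessSet {a : ℕ} (ha : a ∈ witnessSet s t) : 0 < a := by
  obtain ⟨n, -, rfl⟩ := mem_image.mp ha
  simp [base]

theorem sup_witnessSet_le : (witnessSet s t).sup id ≤ base s t + s * t * step s t :=
  Finset.sup_le fun a ha => by
    obtain ⟨n, hn, rfl⟩ := mem_image.mp ha
    exact Nat.add_le_add_left (Nat.mul_le_mul_right _ (mem_range.mp hn).le) _

theorem exists_modEq :
    ∃ M : ℕ, ∀ n < s * t, M ≡ n % s * step s t [MOD base s t + n * step s t] :=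
  let M := Nat.chineseRemainderOfFinset (fun n => n % s * step s t)
    (fun n => base s t + n * step s t) (range (s * t)) (fun n _ => by simp [base])
    (fun n hn n' hn' hne => Nat.coprime_add_mul_factorial (base_coprime_step s t)
      (mem_range.mp hn) (mem_range.mp hn') hne)
  ⟨M, fun n hn => M.2 n (mem_range.mpr hn)⟩

def targets (M : ℤ) : Finset ℤ :=
  (range s).image (fun i : ℕ => M - i * step s t) ∪
    (range t).image (fun j : ℕ => M + base s t + s * j * step s t)

theorem card_targets_le (M : ℤ) : (targets s t M).card ≤ s + t :=
  (card_union_le _ _).trans <| add_le_add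
    (card_image_le.trans (card_range s).le) (card_image_le.trans (card_range t).le)

theorem mem_targets_of_dvd {M : ℕ} {n : ℕ} (hn : n < s * t)
    (hM : M ≡ n % s * step s t [MOD base s t + n * step s t]) {b : ℤ}
    (hdvd : ((base s t + n * step s t : ℕ) : ℤ) ∣ b)
    (hlo : (M : ℤ) - base s t < b)
    (hhi : b < (M : ℤ) - base s t + 2 * (base s t + s * t * step s t)) :
    b ∈ targets s t M := by
  have hs : 0 < s := Nat.pos_of_mul_pos_right (by omega : 0 < s * t)
  have hdecomp : n % s + s * (n / s) = n := Nat.mod_add_div n s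
  have hi : n % s < s := Nat.mod_lt n hs
  have hj : n / s < t := Nat.div_lt_of_lt_mul hn
  set E : ℤ := ((base s t + n * step s t : ℕ) : ℤ)
  set r : ℤ := M - (n % s : ℕ) * step s t
  have hr : E ∣ b - r := by
    have hMr : E ∣ ((n % s * step s t : ℕ) : ℤ) - M := (Int.natCast_modEq_iff.mpr hM).dvd
    rw [show b - r = b + (((n % s * step s t : ℕ) : ℤ) - M) by push_cast [r]; ring]
    exact dvd_add hdvd hMr
  have hE : E = base s t + n * step s t := by push_cast [E]; rfl
  have hshift : ((n % s : ℕ) : ℤ) * step s t ≤ n * step s t := by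
    gcongr
    exact_mod_cast Nat.mod_le n s
  have hbase : (base s t : ℤ) = 2 * (s * t) * step s t + 1 := by push_cast [base]; rfl
  have hn' : (n : ℤ) < s * t := by exact_mod_cast hn
  have hstep : (0 : ℤ) ≤ step s t := by positivity
  -- `N > 2stδ` keeps `r + 2E` beyond the window, `n ≥ i` keeps `r - E` below it.
  rcases Int.eq_or_eq_add_of_dvd_sub hr (by nlinarith) (by nlinarith) with rfl | rfl
  · exact mem_union_left _ (mem_image.mpr ⟨n % s, mem_range.mpr hi, rfl⟩)
  · refine mem_union_right _ (mem_image.mpr ⟨n / s, mem_range.mpr hj, ?_⟩)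
    have hn_eq : (n : ℤ) = (n % s : ℕ) + s * (n / s : ℕ) := by exact_mod_cast hdecomp.symm
    rw [hE, hn_eq]
    ring

theorem le_of_matchProp {r : ℕ} (hr : MatchProp (s * t) r) : r ≤ s + t := by
  obtain ⟨M, hM⟩ := exists_modEq s t
  obtain ⟨c, b, -, hb, hcb⟩ := hr (witnessSet s t) (card_witnessSet s t)
    (fun _ => pos_of_mem_witnessSet s t) (((M : ℤ) - base s t : ℤ) : ℝ)
  have hmem : ∀ k, b k ∈ targets s t M := by
    intro k
    obtain ⟨hc, hdvd, hlo, hhi⟩ := hcb k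
    obtain ⟨n, hn, hcn⟩ := mem_image.mp hc
    have hsup : (((witnessSet s t).sup id : ℕ) : ℝ) ≤ ((base s t + s * t * step s t : ℕ) : ℝ) :=
      mod_cast sup_witnessSet_le s t
    refine mem_targets_of_dvd s t (mem_range.mp hn) (hM n (mem_range.mp hn)) (hcn ▸ hdvd)
      (by exact_mod_cast hlo) ?_
    have : (b k : ℝ) < (((M : ℤ) - base s t + 2 * (base s t + s * t * step s t) : ℤ) : ℝ) := by
      push_cast at hsup hhi ⊢
      linarith
    exact_mod_cast this
  calc r = (univ : Finset (Fin r)).card := (card_fin r).symm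
    _ ≤ (targets s t M).card := card_le_card_of_injOn b (fun k _ => hmem k) hb.injOn
    _ ≤ s + t := card_targets_le s t M

end ErdosUpperBound

theorem erdos_f_upper_bound_general (s t : ℕ) :
    f (s * t) ≤ s + t :=
  csSup_le ⟨0, matchProp_zero _⟩ fun _ => ErdosUpperBound.le_of_matchProp s t

theorem erdos_f_upper_bound (s t : ℕ) (hs : 0 < s) (ht : 0 < t) :
    f (s * t) ≤ s + t :=
  erdos_f_upper_bound_general s t
end

section
/- For every positive integer m, f(m) ≥ min(m, ⌈2√m⌉). -/
open Finset

/-- Arithmetic: if `s ≤ d*g + e` with `d,g ≥ 1`, `e ≤ 1`, then `⌈2√s⌉ ≤ d+g+e`. -/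
lemma ceil_two_sqrt_le {d g e s : ℕ} (hd : 1 ≤ d) (hg : 1 ≤ g) (he : e ≤ 1)
    (hs : s ≤ d * g + e) : ⌈2 * Real.sqrt s⌉₊ ≤ d + g + e := by
  have h4 : (4 : ℕ) * s ≤ (d + g + e) ^ 2 := by
    have := two_mul_le_add_sq d g
    interval_cases e <;> nlinarith
  rw [Nat.ceil_le]
  have h4' : (4 : ℝ) * s ≤ ((d + g + e : ℕ) : ℝ) ^ 2 := by exact_mod_cast h4
  calc 2 * Real.sqrt s = Real.sqrt (4 * s) := by
        rw [show (4 : ℝ) * s = 2 ^ 2 * s by ring, Real.sqrt_mul (by norm_num),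
          Real.sqrt_sq (by norm_num)]
    _ ≤ Real.sqrt (((d + g + e : ℕ) : ℝ) ^ 2) := Real.sqrt_le_sqrt h4'
    _ = ((d + g + e : ℕ) : ℝ) := Real.sqrt_sq (by positivity)

/-- Monotone defect lemma: for `1 ≤ s ≤ m`, `s + ⌈2√m⌉ ≤ ⌈2√s⌉ + m`. -/
lemma sub_ceil_mono {s m : ℕ} (h1 : 1 ≤ s) (hsm : s ≤ m) :
    s + ⌈2 * Real.sqrt m⌉₊ ≤ ⌈2 * Real.sqrt s⌉₊ + m := by
  induction m, hsm using Nat.le_induction with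
  | base => omega
  | succ m hm ih =>
    have hm1 : 1 ≤ m := le_trans h1 hm
    have key : ⌈2 * Real.sqrt (m + 1 : ℕ)⌉₊ ≤ ⌈2 * Real.sqrt m⌉₊ + 1 := by
      have hsq : (1 : ℝ) ≤ Real.sqrt m := by
        rw [show (1:ℝ) = Real.sqrt 1 by simp]
        exact Real.sqrt_le_sqrt (by exact_mod_cast hm1)
      have hmain : 2 * Real.sqrt ((m : ℕ) + 1 : ℕ) ≤ 2 * Real.sqrt m + 1 := by
        have hs2 : Real.sqrt m ^ 2 = (m : ℝ) := Real.sq_sqrt (by positivity)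
        have : ((((m : ℕ) + 1 : ℕ)) : ℝ) = (m : ℝ) + 1 := by push_cast; ring
        rw [show 2 * Real.sqrt ((m : ℕ) + 1 : ℕ) = Real.sqrt (4 * (((m:ℕ) + 1 : ℕ) : ℝ)) by
          rw [show (4:ℝ) * (((m:ℕ)+1:ℕ):ℝ) = 2 ^ 2 * (((m:ℕ)+1:ℕ):ℝ) by ring,
            Real.sqrt_mul (by norm_num), Real.sqrt_sq (by norm_num)]]
        have h2 : (4:ℝ) * (((m:ℕ)+1:ℕ):ℝ) ≤ (2 * Real.sqrt m + 1) ^ 2 := by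
          rw [this]; nlinarith [hsq, hs2]
        calc Real.sqrt (4 * (((m:ℕ)+1:ℕ):ℝ)) ≤ Real.sqrt ((2 * Real.sqrt m + 1)^2) :=
              Real.sqrt_le_sqrt h2
          _ = 2 * Real.sqrt m + 1 := Real.sqrt_sq (by positivity)
      calc ⌈2 * Real.sqrt ((m:ℕ) + 1 : ℕ)⌉₊ ≤ ⌈2 * Real.sqrt m + 1⌉₊ :=
            Nat.ceil_le_ceil hmain
        _ = ⌈2 * Real.sqrt m⌉₊ + 1 := Nat.ceil_add_one (by positivity)
    omega

/-- Defect bound used for Hall's condition. -/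
lemma defect_bound {s m : ℕ} (hsm : s ≤ m) :
    s ≤ min s ⌈2 * Real.sqrt s⌉₊ + (m - min m ⌈2 * Real.sqrt m⌉₊) := by
  by_cases hs : s ≤ ⌈2 * Real.sqrt s⌉₊
  · omega
  · push_neg at hs
    have h1 : 1 ≤ s := by omega
    have := sub_ceil_mono h1 hsm
    have h2 : min m ⌈2 * Real.sqrt m⌉₊ ≤ ⌈2 * Real.sqrt m⌉₊ := min_le_right _ _
    have h3 : min m ⌈2 * Real.sqrt m⌉₊ ≤ m := min_le_left _ _
    have h4 : min s ⌈2 * Real.sqrt s⌉₊ = ⌈2 * Real.sqrt s⌉₊ := by omega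
    omega



open Classical in
/-- The set of integers in `(x, x+2a)` divisible by some element of `S`. -/
noncomputable def NSet (x : ℝ) (a : ℕ) (S : Finset ℕ) : Finset ℤ :=
  (Finset.Icc (⌊x⌋ + 1) (⌊x⌋ + 2 * a)).filter
    (fun b : ℤ => x < (b : ℝ) ∧ (b : ℝ) < x + 2 * a ∧ ∃ c ∈ S, (c : ℤ) ∣ b)

lemma mem_NSet {x : ℝ} {a : ℕ} {S : Finset ℕ} {b : ℤ} :
    b ∈ NSet x a S ↔ x < (b : ℝ) ∧ (b : ℝ) < x + 2 * a ∧ ∃ c ∈ S, (c : ℤ) ∣ b := by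
  classical
  constructor
  · intro h
    simp only [NSet, Finset.mem_filter] at h
    exact h.2
  · intro h
    have h1 : (⌊x⌋ : ℝ) < b := lt_of_le_of_lt (Int.floor_le x) h.1
    have h1' : ⌊x⌋ + 1 ≤ b := by exact_mod_cast Int.add_one_le_iff.mpr (by exact_mod_cast h1)
    have h2 : (b : ℝ) < (⌊x⌋ : ℝ) + 1 + 2 * a := by
      have := Int.lt_floor_add_one x; linarith [h.2.1]
    have h2' : b ≤ ⌊x⌋ + 2 * a := by
      have : (b : ℤ) < ⌊x⌋ + 1 + 2 * a := by exact_mod_cast h2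
      omega
    simp only [NSet, Finset.mem_filter, Finset.mem_Icc]
    exact ⟨⟨h1', h2'⟩, h⟩

/-- Fiber decomposition: a maximal fiber. -/
lemma fiber_bound {S : Finset ℕ} (hne : S.Nonempty) (P : ℕ → ℤ) :
    ∃ P₀ : ℤ, (S.filter (fun c => P c = P₀)).Nonempty ∧
      S.card ≤ (S.image P).card * (S.filter (fun c => P c = P₀)).card := by
  classical
  have hTne : (S.image P).Nonempty := hne.image P
  obtain ⟨P₀, hP₀T, hmax⟩ :=
    (S.image P).exists_max_image (fun v => (S.filter (fun c => P c = v)).card) hTne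
  refine ⟨P₀, ?_, ?_⟩
  · obtain ⟨c₀, hc₀S, hc₀⟩ := Finset.mem_image.mp hP₀T
    exact ⟨c₀, Finset.mem_filter.mpr ⟨hc₀S, hc₀⟩⟩
  · have hsum := Finset.card_eq_sum_card_fiberwise (f := P) (s := S) (t := S.image P)
      (fun c hc => Finset.mem_image_of_mem P hc)
    rw [hsum]
    have := Finset.sum_le_card_nsmul (S.image P)
      (fun v => (S.filter (fun c => P c = v)).card)
      ((S.filter (fun c => P c = P₀)).card) (fun v hv => hmax v hv)
    simpa [smul_eq_mul] using this

/-- Core counting lemma. -/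
lemma core_lemma (a : ℕ) (x : ℝ) (S : Finset ℕ) (hSne : S.Nonempty)
    (hS : ∀ c ∈ S, 0 < c ∧ c ≤ a) :
    min S.card ⌈2 * Real.sqrt S.card⌉₊ ≤ (NSet x a S).card := by
  classical
  have ha : 1 ≤ a := by
    obtain ⟨c, hc⟩ := hSne
    exact le_trans (hS c hc).1 (hS c hc).2
  have haR : (1 : ℝ) ≤ (a : ℕ) := by exact_mod_cast ha
  -- the "center" function
  set P : ℕ → ℤ := fun c => (c : ℤ) * ⌊(x + a) / (c : ℝ)⌋ with hPdef
  have hPle : ∀ c ∈ S, (P c : ℝ) ≤ x + a := by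
    intro c hc
    have hcpos : (0 : ℝ) < c := by exact_mod_cast (hS c hc).1
    have := Int.floor_le ((x + a) / (c : ℝ))
    have h2 : (c : ℝ) * (⌊(x + a) / (c : ℝ)⌋ : ℝ) ≤ (c : ℝ) * ((x + a) / (c : ℝ)) :=
      mul_le_mul_of_nonneg_left this (le_of_lt hcpos)
    rw [mul_div_cancel₀ _ (ne_of_gt hcpos)] at h2
    calc (P c : ℝ) = (c : ℝ) * (⌊(x + a) / (c : ℝ)⌋ : ℝ) := by push_cast [hPdef]; ring
      _ ≤ x + a := h2
  have hPgt : ∀ c ∈ S, x + a - c < (P c : ℝ) := by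
    intro c hc
    have hcpos : (0 : ℝ) < c := by exact_mod_cast (hS c hc).1
    have := Int.lt_floor_add_one ((x + a) / (c : ℝ))
    have h2 : (x + a) / (c : ℝ) * c < ((⌊(x + a) / (c : ℝ)⌋ : ℝ) + 1) * c := by
      exact mul_lt_mul_of_pos_right this hcpos
    rw [div_mul_cancel₀ _ (ne_of_gt hcpos)] at h2
    have : (P c : ℝ) = (c : ℝ) * (⌊(x + a) / (c : ℝ)⌋ : ℝ) := by push_cast [hPdef]; ring
    nlinarith
  have hPx : ∀ c ∈ S, x < (P c : ℝ) := by
    intro c hc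
    have hca : (c : ℝ) ≤ a := by exact_mod_cast (hS c hc).2
    have := hPgt c hc; linarith
  have hPdvd : ∀ c : ℕ, (c : ℤ) ∣ P c := fun c => Dvd.intro _ rfl
  have hPmem : ∀ c ∈ S, P c ∈ NSet x a S := by
    intro c hc
    exact mem_NSet.mpr ⟨hPx c hc, by have := hPle c hc; linarith, ⟨c, hc, hPdvd c⟩⟩
  by_cases hdeg : a ∈ S ∧ (P a : ℝ) = x + a
  · -- degenerate case
    obtain ⟨haS, hPa⟩ := hdeg
    set X : ℤ := P a with hXdef
    have hXx : (X : ℝ) = x + a := hPa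
    have hXmem : X ∈ NSet x a S :=
      mem_NSet.mpr ⟨by rw [hXx]; linarith, by rw [hXx]; linarith, ⟨a, haS, hPdvd a⟩⟩
    set S' : Finset ℕ := S.erase a with hS'def
    by_cases hS'ne : S'.Nonempty
    · -- main degenerate case
      have hS'lt : ∀ c ∈ S', 0 < c ∧ c < a := by
        intro c hc
        have h1 := hS c (Finset.mem_of_mem_erase hc)
        have h2 := Finset.ne_of_mem_erase hc
        exact ⟨h1.1, lt_of_le_of_ne h1.2 h2⟩
      set Q : ℕ → ℤ := fun c => (c : ℤ) * ((X - 1) / (c : ℤ)) with hQdef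
      have hQfacts : ∀ c ∈ S', X - c ≤ Q c ∧ Q c ≤ X - 1 ∧ (c : ℤ) ∣ Q c := by
        intro c hc
        have hcpos : (0 : ℤ) < c := by exact_mod_cast (hS'lt c hc).1
        have hmod1 := Int.emod_nonneg (X - 1) (ne_of_gt hcpos)
        have hmod2 := Int.emod_lt_of_pos (X - 1) hcpos
        have heq := Int.mul_ediv_add_emod (X - 1) (c : ℤ)
        have hQc : Q c = (c : ℤ) * ((X - 1) / (c : ℤ)) := by rw [hQdef]
        exact ⟨by omega, by omega, by rw [hQc]; exact Dvd.intro _ rfl⟩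
      have hQmem : ∀ c ∈ S', Q c ∈ NSet x a S := by
        intro c hc
        obtain ⟨hq1, hq2, hq3⟩ := hQfacts c hc
        have hca : (c : ℝ) + 1 ≤ a := by exact_mod_cast (hS'lt c hc).2
        have hlow : x < (Q c : ℝ) := by
          have : ((X - c : ℤ) : ℝ) ≤ (Q c : ℝ) := by exact_mod_cast hq1
          push_cast at this; rw [hXx] at this; linarith
        have hhigh : (Q c : ℝ) < x + 2 * a := by
          have : (Q c : ℝ) ≤ ((X - 1 : ℤ) : ℝ) := by exact_mod_cast hq2
          push_cast at this; rw [hXx] at this; linarith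
        exact mem_NSet.mpr ⟨hlow, hhigh, ⟨c, Finset.mem_of_mem_erase hc, hq3⟩⟩
      obtain ⟨P₀, hGne, hcards⟩ := fiber_bound hS'ne Q
      set G : Finset ℕ := S'.filter (fun c => Q c = P₀) with hGdef
      set T : Finset ℤ := S'.image Q with hTdef
      have hGS' : G ⊆ S' := Finset.filter_subset _ _
      -- uppers
      set U : Finset ℤ := G.image (fun c : ℕ => P₀ + (c : ℤ)) with hUdef
      have hUmem : ∀ b ∈ U, b ∈ NSet x a S ∧ X ≤ b := by
        intro b hb
        obtain ⟨c, hcG, rfl⟩ := Finset.mem_image.mp hb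
        have hcS' := hGS' hcG
        obtain ⟨hq1, hq2, hq3⟩ := hQfacts c hcS'
        have hQP : Q c = P₀ := (Finset.mem_filter.mp hcG).2
        have hclt := (hS'lt c hcS')
        have hge : X ≤ P₀ + (c : ℤ) := by omega
        have hle : P₀ + (c : ℤ) ≤ X + (a : ℤ) - 2 := by
          have hca : (c : ℤ) < (a : ℤ) := by exact_mod_cast hclt.2
          omega
        have hdvd : (c : ℤ) ∣ P₀ + (c : ℤ) := by
          have : (c : ℤ) ∣ Q c + (c : ℤ) := hq3.add dvd_rfl
          rwa [hQP] at this
        refine ⟨mem_NSet.mpr ⟨?_, ?_, ⟨c, Finset.mem_of_mem_erase hcS', hdvd⟩⟩, hge⟩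
        · have h' : (X : ℝ) ≤ ((P₀ + (c : ℤ) : ℤ) : ℝ) := by exact_mod_cast hge
          rw [hXx] at h'
          push_cast at h' ⊢
          linarith [haR]
        · have h' : ((P₀ + (c : ℤ) : ℤ) : ℝ) ≤ ((X + (a : ℤ) - 2 : ℤ) : ℝ) := by
            exact_mod_cast hle
          push_cast at h'
          rw [hXx] at h'
          push_cast at h' ⊢
          linarith
      have hTmem : ∀ b ∈ T, b ∈ NSet x a S ∧ b ≤ X - 1 := by
        intro b hb
        obtain ⟨c, hcS', rfl⟩ := Finset.mem_image.mp hb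
        exact ⟨hQmem c hcS', (hQfacts c hcS').2.1⟩
      -- the extra vertex
      have hextra : ∃ w : ℤ, w ∈ NSet x a S ∧ X ≤ w ∧ w ∉ U := by
        by_cases hD : ∃ c₀ ∈ G, (c₀ : ℤ) ∣ X
        · obtain ⟨c₀, hc₀G, hc₀X⟩ := hD
          have hc₀S' := hGS' hc₀G
          have hc₀lt := hS'lt c₀ hc₀S'
          -- P₀ = X - c₀
          have hP₀eq : P₀ = X - (c₀ : ℤ) := by
            obtain ⟨hq1, hq2, hq3⟩ := hQfacts c₀ hc₀S'
            have hQP : Q c₀ = P₀ := (Finset.mem_filter.mp hc₀G).2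
            have hdvd : (c₀ : ℤ) ∣ (Q c₀ - (X - (c₀ : ℤ))) := by
              exact dvd_sub hq3 (dvd_sub hc₀X dvd_rfl)
            obtain ⟨k, hk⟩ := hdvd
            have hcpos : (0 : ℤ) < c₀ := by exact_mod_cast hc₀lt.1
            have h0 : Q c₀ - (X - (c₀ : ℤ)) = 0 := by
              rcases lt_trichotomy k 0 with h | h | h
              · nlinarith
              · rw [h] at hk; omega
              · nlinarith
            omega
          -- maximal multiple of c₀ in G
          set K : Finset ℕ := (Finset.range (a + 1)).filter (fun k => 0 < k ∧ k * c₀ ∈ G)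
            with hKdef
          have h1K : 1 ∈ K := by
            refine Finset.mem_filter.mpr ⟨Finset.mem_range.mpr (by omega), by omega, ?_⟩
            rw [one_mul]; exact hc₀G
          have hKne : K.Nonempty := ⟨1, h1K⟩
          set k₀ : ℕ := K.max' hKne with hk₀def
          have hk₀K := K.max'_mem hKne
          have hk₀ : 0 < k₀ ∧ k₀ * c₀ ∈ G := (Finset.mem_filter.mp hk₀K).2
          have hkcS' := hGS' hk₀.2
          have hkclt := hS'lt _ hkcS'
          refine ⟨X + (k₀ * c₀ : ℕ), ?_, by omega, ?_⟩
          · refine mem_NSet.mpr ⟨?_, ?_, ⟨c₀, Finset.mem_of_mem_erase hc₀S', ?_⟩⟩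
            · have hx : x < (X : ℝ) := by rw [hXx]; linarith
              have h0 : (0:ℝ) ≤ ((k₀ * c₀ : ℕ) : ℝ) := by positivity
              push_cast at hx h0 ⊢
              linarith
            · have hlt : (k₀ * c₀ : ℕ) < a := hkclt.2
              have h1 : ((k₀ * c₀ : ℕ) : ℝ) < (a : ℝ) := by exact_mod_cast hlt
              have h2 : (X:ℝ) = x + a := hXx
              push_cast at h1 h2 ⊢
              linarith
            · push_cast
              exact dvd_add hc₀X (dvd_mul_left _ _)
          · intro hmem
            obtain ⟨c, hcG, hc⟩ := Finset.mem_image.mp hmem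
            rw [hP₀eq] at hc
            have hceq0 : (c : ℤ) = ((k₀ * c₀ : ℕ) : ℤ) + (c₀ : ℤ) := by omega
            have hceq' : c = (k₀ + 1) * c₀ := by
              have h' : c = k₀ * c₀ + c₀ := by exact_mod_cast hceq0
              rw [h']; ring
            have hmemK : (k₀ + 1) ∈ K := by
              refine Finset.mem_filter.mpr ⟨Finset.mem_range.mpr ?_, by omega, by
                rw [← hceq']; exact hcG⟩
              have h1 : 1 ≤ c₀ := hc₀lt.1
              have h2 := (hS'lt c (hGS' hcG)).2
              have h3 : k₀ + 1 ≤ (k₀ + 1) * c₀ := Nat.le_mul_of_pos_right _ h1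
              omega
            have := K.le_max' _ hmemK
            omega
        · push_neg at hD
          refine ⟨X, hXmem, le_refl X, ?_⟩
          intro hmem
          obtain ⟨c, hcG, hc⟩ := Finset.mem_image.mp hmem
          have hQP : Q c = P₀ := (Finset.mem_filter.mp hcG).2
          have hq3 := (hQfacts c (hGS' hcG)).2.2
          have hcX : (c : ℤ) ∣ X := by
            rw [← hc, ← hQP]
            exact hq3.add dvd_rfl
          exact absurd hcX (hD c hcG)
      obtain ⟨w, hwN, hwX, hwU⟩ := hextra
      -- count
      have hsub : T ∪ U ∪ {w} ⊆ NSet x a S := by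
        intro b hb
        rcases Finset.mem_union.mp hb with hb | hb
        · rcases Finset.mem_union.mp hb with hb | hb
          · exact (hTmem b hb).1
          · exact (hUmem b hb).1
        · rw [Finset.mem_singleton.mp hb]; exact hwN
      have hdisj1 : Disjoint T U := by
        rw [Finset.disjoint_left]
        intro b hbT hbU
        have := (hTmem b hbT).2
        have := (hUmem b hbU).2
        omega
      have hdisj2 : Disjoint (T ∪ U) {w} := by
        rw [Finset.disjoint_right]
        intro b hb hbTU
        rw [Finset.mem_singleton.mp hb] at hbTU
        rcases Finset.mem_union.mp hbTU with hb' | hb'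
        · have := (hTmem _ hb').2; omega
        · exact hwU hb'
      have hcardU : U.card = G.card := by
        rw [hUdef]
        apply Finset.card_image_of_injective
        intro u v huv
        have huv' : P₀ + (u : ℤ) = P₀ + (v : ℤ) := huv
        have h'' : (u : ℤ) = (v : ℤ) := by omega
        exact_mod_cast h''
      have hcard : T.card + G.card + 1 ≤ (NSet x a S).card := by
        have := Finset.card_le_card hsub
        rw [Finset.card_union_of_disjoint hdisj2, Finset.card_union_of_disjoint hdisj1,
          hcardU, Finset.card_singleton] at this
        exact this
      -- arithmetic
      have hdT : 1 ≤ T.card := Finset.card_pos.mpr (hS'ne.image Q)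
      have hgG : 1 ≤ G.card := Finset.card_pos.mpr hGne
      have hScard : S.card = S'.card + 1 := by
        rw [hS'def, Finset.card_erase_of_mem haS]
        have : 1 ≤ S.card := Finset.card_pos.mpr hSne
        omega
      have harith : ⌈2 * Real.sqrt S.card⌉₊ ≤ T.card + G.card + 1 :=
        ceil_two_sqrt_le hdT hgG le_rfl (by omega)
      calc min S.card ⌈2 * Real.sqrt S.card⌉₊ ≤ ⌈2 * Real.sqrt S.card⌉₊ := min_le_right _ _
        _ ≤ T.card + G.card + 1 := harith
        _ ≤ (NSet x a S).card := hcard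
    · -- S' empty: S = {a}
      have hS1 : S.card = 1 := by
        rw [Finset.not_nonempty_iff_eq_empty] at hS'ne
        have := Finset.card_erase_of_mem haS
        rw [← hS'def, hS'ne] at this
        simp at this
        have h1 : 1 ≤ S.card := Finset.card_pos.mpr hSne
        omega
      have : 1 ≤ (NSet x a S).card := Finset.card_pos.mpr ⟨X, hXmem⟩
      calc min S.card ⌈2 * Real.sqrt S.card⌉₊ ≤ S.card := min_le_left _ _
        _ = 1 := hS1
        _ ≤ (NSet x a S).card := this
  · -- non-degenerate case
    have hup : ∀ c ∈ S, (P c : ℝ) + c < x + 2 * a := by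
      intro c hc
      rcases lt_or_eq_of_le (hS c hc).2 with h | h
      · have hle := hPle c hc
        have : (c : ℝ) < a := by exact_mod_cast h
        linarith
      · subst h
        have hne : (P c : ℝ) ≠ x + c := fun he => hdeg ⟨hc, he⟩
        have hlt : (P c : ℝ) < x + c := lt_of_le_of_ne (hPle c hc) hne
        linarith
    obtain ⟨P₀, hGne, hcards⟩ := fiber_bound hSne P
    set G : Finset ℕ := S.filter (fun c => P c = P₀) with hGdef
    set T : Finset ℤ := S.image P with hTdef
    set U : Finset ℤ := G.image (fun c : ℕ => P₀ + (c : ℤ)) with hUdef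
    have hGS : G ⊆ S := Finset.filter_subset _ _
    have hTmem : ∀ b ∈ T, b ∈ NSet x a S ∧ (b : ℝ) ≤ x + a := by
      intro b hb
      obtain ⟨c, hcS, rfl⟩ := Finset.mem_image.mp hb
      exact ⟨hPmem c hcS, hPle c hcS⟩
    have hUmem : ∀ b ∈ U, b ∈ NSet x a S ∧ x + a < (b : ℝ) := by
      intro b hb
      obtain ⟨c, hcG, rfl⟩ := Finset.mem_image.mp hb
      have hcS := hGS hcG
      have hQP : P c = P₀ := (Finset.mem_filter.mp hcG).2
      have hgt := hPgt c hcS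
      have hcpos : (0 : ℝ) < c := by exact_mod_cast (hS c hcS).1
      have hb2 : x + (a : ℝ) < ((P₀ + (c : ℤ) : ℤ) : ℝ) := by
        push_cast
        rw [← hQP]
        push_cast
        linarith
      have hdvd : (c : ℤ) ∣ P₀ + (c : ℤ) := by
        rw [← hQP]
        exact (hPdvd c).add dvd_rfl
      have hb3 : ((P₀ + (c : ℤ) : ℤ) : ℝ) < x + 2 * (a : ℝ) := by
        have := hup c hcS
        push_cast
        rw [← hQP]
        push_cast
        linarith
      have hb1 : x < ((P₀ + (c : ℤ) : ℤ) : ℝ) := by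
        push_cast at hb2 ⊢
        linarith
      exact ⟨mem_NSet.mpr ⟨hb1, hb3, ⟨c, hcS, hdvd⟩⟩, hb2⟩
    have hdisj : Disjoint T U := by
      rw [Finset.disjoint_left]
      intro b hbT hbU
      have h1 := (hTmem b hbT).2
      have h2 := (hUmem b hbU).2
      linarith
    have hsub : T ∪ U ⊆ NSet x a S := by
      intro b hb
      rcases Finset.mem_union.mp hb with hb | hb
      · exact (hTmem b hb).1
      · exact (hUmem b hb).1
    have hcardU : U.card = G.card := by
      rw [hUdef]
      apply Finset.card_image_of_injective
      intro u v huv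
      have huv' : P₀ + (u : ℤ) = P₀ + (v : ℤ) := huv
      have h'' : (u : ℤ) = (v : ℤ) := by omega
      exact_mod_cast h''
    have hcard : T.card + G.card ≤ (NSet x a S).card := by
      have := Finset.card_le_card hsub
      rw [Finset.card_union_of_disjoint hdisj, hcardU] at this
      exact this
    have hdT : 1 ≤ T.card := Finset.card_pos.mpr (hSne.image P)
    have hgG : 1 ≤ G.card := Finset.card_pos.mpr hGne
    have harith : ⌈2 * Real.sqrt S.card⌉₊ ≤ T.card + G.card := by
      have h := ceil_two_sqrt_le (e := 0) (s := S.card) hdT hgG (by omega) (by omega)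
      omega
    calc min S.card ⌈2 * Real.sqrt S.card⌉₊ ≤ ⌈2 * Real.sqrt S.card⌉₊ := min_le_right _ _
      _ ≤ T.card + G.card := harith
      _ ≤ (NSet x a S).card := hcard

theorem matchProp_holds (m : ℕ) (hm : 0 < m) :
    MatchProp m (min m ⌈2 * Real.sqrt m⌉₊) := by
  intro A hA hpos x
  classical
  set k := min m ⌈2 * Real.sqrt m⌉₊ with hk
  have hkm : k ≤ m := min_le_left _ _
  have hAne : A.Nonempty := Finset.card_pos.mp (by omega)
  set a := A.sup id with ha
  have haA : a ∈ A := by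
    have h1 := A.max'_mem hAne
    have h2 : A.max' hAne = a := by
      rw [Finset.max'_eq_sup' A hAne, Finset.sup'_eq_sup]
    rwa [h2] at h1
  have hle : ∀ c ∈ A, c ≤ a := fun c hc => Finset.le_sup (f := id) hc
  set D : Finset ℤ := (Finset.range (m - k)).image (fun i : ℕ => ⌊x⌋ - (i : ℤ)) with hD
  have hDcard : D.card = m - k := by
    rw [hD, Finset.card_image_of_injective, Finset.card_range]
    intro u v huv
    have huv' : ⌊x⌋ - (u : ℤ) = ⌊x⌋ - (v : ℤ) := huv
    have : (u : ℤ) = v := by omega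
    exact_mod_cast this
  have hDle : ∀ b ∈ D, b ≤ ⌊x⌋ := by
    intro b hb
    obtain ⟨i, _, rfl⟩ := Finset.mem_image.mp hb
    omega
  set t : {c // c ∈ A} → Finset ℤ := fun c => NSet x a {c.val} ∪ D with ht
  have hall : ∀ s : Finset {c // c ∈ A}, s.card ≤ (s.biUnion t).card := by
    intro s
    rcases s.eq_empty_or_nonempty with rfl | hsne
    · simp
    · set S : Finset ℕ := s.image Subtype.val with hSdef
      have hSne : S.Nonempty := hsne.image _
      have hScard : S.card = s.card :=
        Finset.card_image_of_injective _ Subtype.val_injective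
      have hSsub : S ⊆ A := by
        intro c hc
        obtain ⟨c', _, rfl⟩ := Finset.mem_image.mp hc
        exact c'.2
      have hSm : S.card ≤ m := by
        have := Finset.card_le_card hSsub; omega
      have hcond : ∀ c ∈ S, 0 < c ∧ c ≤ a := fun c hc =>
        ⟨hpos c (hSsub hc), hle c (hSsub hc)⟩
      have hsub : NSet x a S ∪ D ⊆ s.biUnion t := by
        intro b hb
        rcases Finset.mem_union.mp hb with hb | hb
        · obtain ⟨h1, h2, c, hcS, hdvd⟩ := mem_NSet.mp hb
          obtain ⟨c', hc's, hc'v⟩ := Finset.mem_image.mp hcS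
          refine Finset.mem_biUnion.mpr ⟨c', hc's, Finset.mem_union_left _ ?_⟩
          exact mem_NSet.mpr ⟨h1, h2, c, by rw [hc'v]; exact Finset.mem_singleton_self c, hdvd⟩
        · obtain ⟨c', hc's⟩ := hsne
          exact Finset.mem_biUnion.mpr ⟨c', hc's, Finset.mem_union_right _ hb⟩
      have hdisj : Disjoint (NSet x a S) D := by
        rw [Finset.disjoint_left]
        intro b hb hbD
        have h1 := (mem_NSet.mp hb).1
        have h2 := hDle b hbD
        have : (b : ℝ) ≤ x := le_trans (by exact_mod_cast h2) (Int.floor_le x)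
        linarith
      have hcount := Finset.card_le_card hsub
      rw [Finset.card_union_of_disjoint hdisj, hDcard] at hcount
      have hcore := core_lemma a x S hSne hcond
      have hdefect := defect_bound hSm
      omega
  obtain ⟨F, hFinj, hFmem⟩ :=
    (Finset.all_card_le_biUnion_card_iff_exists_injective t).mp hall
  set Good : Finset {c // c ∈ A} := Finset.univ.filter (fun c => F c ∉ D) with hGood
  have hunivcard : (Finset.univ : Finset {c // c ∈ A}).card = m := by
    rw [Finset.card_univ, Fintype.card_coe, hA]
  have hBadcard : (Finset.univ.filter (fun c : {c // c ∈ A} => F c ∈ D)).card ≤ m - k := by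
    have h1 : (Finset.univ.filter (fun c : {c // c ∈ A} => F c ∈ D)).card ≤ D.card :=
      Finset.card_le_card_of_injOn
        (s := Finset.univ.filter (fun c : {c // c ∈ A} => F c ∈ D)) (t := D) F
        (fun c hc => (Finset.mem_filter.mp hc).2) (fun u _ v _ h => hFinj h)
    omega
  have hGoodcard : k ≤ Good.card := by
    have hsplit := Finset.card_filter_add_card_filter_not
      (s := (Finset.univ : Finset {c // c ∈ A})) (p := fun c => F c ∈ D)
    simp only [hunivcard] at hsplit
    have : Good = Finset.univ.filter (fun c => ¬ (F c ∈ D)) := rfl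
    rw [this]
    omega
  obtain ⟨W, hWsub, hWcard⟩ := Finset.exists_subset_card_eq hGoodcard
  set e : {y // y ∈ W} ≃ Fin k := W.equivFinOfCardEq hWcard with he
  refine ⟨fun i => ((e.symm i : {y // y ∈ W}) : {c // c ∈ A}).val,
    fun i => F ((e.symm i : {y // y ∈ W}) : {c // c ∈ A}), ?_, ?_, ?_⟩
  · intro i j hij
    have h1 : ((e.symm i : {y // y ∈ W}) : {c // c ∈ A})
        = ((e.symm j : {y // y ∈ W}) : {c // c ∈ A}) := Subtype.ext hij
    have h2 : (e.symm i : {y // y ∈ W}) = e.symm j := Subtype.ext h1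
    exact e.symm.injective h2
  · intro i j hij
    have h1 : ((e.symm i : {y // y ∈ W}) : {c // c ∈ A})
        = ((e.symm j : {y // y ∈ W}) : {c // c ∈ A}) := hFinj hij
    have h2 : (e.symm i : {y // y ∈ W}) = e.symm j := Subtype.ext h1
    exact e.symm.injective h2
  · intro i
    set c' : {c // c ∈ A} := ((e.symm i : {y // y ∈ W}) : {c // c ∈ A}) with hc'
    have hW : (e.symm i : {y // y ∈ W}).val ∈ W := (e.symm i).2
    have hGoodmem : c' ∈ Good := hWsub hW
    have hnotD : F c' ∉ D := (Finset.mem_filter.mp hGoodmem).2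
    have hFm := hFmem c'
    have hFN : F c' ∈ NSet x a {c'.val} := by
      rcases Finset.mem_union.mp hFm with h | h
      · exact h
      · exact absurd h hnotD
    obtain ⟨h1, h2, c₀, hc₀, hdvd⟩ := mem_NSet.mp hFN
    rw [Finset.mem_singleton] at hc₀
    subst hc₀
    exact ⟨c'.2, hdvd, h1, h2⟩

theorem erdos_f_lower_bound (m : ℕ) (hm : 0 < m) :
    min m ⌈2 * Real.sqrt m⌉₊ ≤ f m := by
  have hmem : min m ⌈2 * Real.sqrt m⌉₊ ∈ {r : ℕ | MatchProp m r} := matchProp_holds m hm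
  have hbdd : BddAbove {r : ℕ | MatchProp m r} := by
    refine ⟨m, fun r hr => ?_⟩
    have hA : ((Finset.range m).image (fun i => i + 1)).card = m := by
      rw [Finset.card_image_of_injective, Finset.card_range]
      intro u v huv
      have huv' : u + 1 = v + 1 := huv
      omega
    have hpos : ∀ a ∈ (Finset.range m).image (fun i => i + 1), 0 < a := by
      intro a haa
      obtain ⟨i, _, rfl⟩ := Finset.mem_image.mp haa
      omega
    obtain ⟨c, b, hcinj, hbinj, h⟩ := hr _ hA hpos 0
    have h2 : (Finset.univ : Finset (Fin r)).card ≤ ((Finset.range m).image (fun i => i + 1)).card :=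
      Finset.card_le_card_of_injOn (s := (Finset.univ : Finset (Fin r))) c
        (fun i _ => (h i).1) (fun u _ v _ huv => hcinj huv)
    simpa [hA] using h2
  exact le_csSup hbdd hmem
end

section
/- For every positive integer m ≥ 4, f(m) = ⌈2√m⌉. -/
open Finset Function

/-!
Lower bound. Write `a = max A` and `s = ⌈2√m⌉`. By Hall's theorem with deficiency `m - s`
it suffices that every `F ⊆ A` has at least `|F| - (m - s)` multiples in the window
`(x, x + 2a)`. Each `c ≤ a` has two consecutive multiples straddling the midpoint `x + a`
inside the window, unless `c = a` and `x + a` is a multiple of `a`; distinct `c` give distinct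
pairs, so `|F| ≤ |L| |U| ≤ (|L| + |U|)² / 4`, where `L` and `U` are the multiples in the
two halves. An extra pair missed by `F` compensates for the exceptional `c = a`, and
`(s - 1)² < 4m` turns this into Hall's condition.

Upper bound. Split `s = p + q` with `pq ≥ m`, and put `T = m!` and `C = K T + 1` for a large
`K`. The moduli `C + n T`, `n < m`, are pairwise coprime, so by the Chinese remainder theorem
some `X` satisfies `X ≡ T (n mod p)` modulo each of them. In the window `(X - C, X - C + 2 max A)`
the only multiples of `C + n T` are `X - T (n mod p)` and `X + C + T p ⌊n / p⌋`: only `p + q`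
integers in total.
-/

theorem Finset.exists_matching_of_card_le_card_biUnion_add {ι α : Type*} [Fintype ι]
    [DecidableEq α] (t : ι → Finset α) {d r : ℕ} (hr : r + d ≤ Fintype.card ι)
    (h : ∀ s : Finset ι, #s ≤ #(s.biUnion t) + d) :
    ∃ (c : Fin r → ι) (b : Fin r → α), Injective c ∧ Injective b ∧ ∀ k, b k ∈ t (c k) := by
  classical
  -- Hall's theorem, after adding `d` dummy targets adjacent to everything.
  obtain ⟨g, hg, hgt⟩ := (all_card_le_biUnion_card_iff_exists_injective
      fun i => (t i).disjSum (univ : Finset (Fin d))).1 fun s => by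
    rcases s.eq_empty_or_nonempty with rfl | ⟨i₀, hi₀⟩
    · simp
    have hbiUnion : s.biUnion (fun i => (t i).disjSum univ) =
        (s.biUnion t).disjSum (univ : Finset (Fin d)) := by
      ext (y | k) <;> simp only [mem_biUnion, inl_mem_disjSum, inr_mem_disjSum, mem_univ,
        and_true]
      exact iff_of_true ⟨i₀, hi₀⟩ trivial
    simpa [hbiUnion] using h s
  set S := univ.filter fun i => ∃ y ∈ t i, g i = .inl y
  have hSc : #Sᶜ ≤ d := by
    refine (card_le_card_of_injOn g (t := univ.map .inr) (fun i hi => ?_) hg.injOn).trans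
      (by simp)
    rcases mem_disjSum.1 (hgt i) with ⟨y, hy, hgy⟩ | ⟨k, -, hgk⟩
    · exact absurd (mem_filter.2 ⟨mem_univ i, y, hy, hgy.symm⟩) (mem_compl.1 hi)
    · simp [← hgk]
  obtain ⟨S', hS'S, hS'⟩ := exists_subset_card_eq (s := S) (n := r)
    (by rw [card_compl] at hSc; omega)
  have hleft : ∀ i : S', ∃ y ∈ t i, g i = .inl y := fun i => (mem_filter.1 (hS'S i.2)).2
  choose y hyt hgy using hleft
  let e := (equivFinOfCardEq hS').symm
  refine ⟨fun k => e k, fun k => y (e k), Subtype.val_injective.comp e.injective,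
    fun k l hkl => e.injective (Subtype.val_injective (hg ?_)), fun k => hyt _⟩
  simp only [hgy, hkl]

noncomputable def nextMultiple (c : ℕ) (t : ℝ) : ℤ := c * ⌈t / c⌉

theorem dvd_nextMultiple (c : ℕ) (t : ℝ) : (c : ℤ) ∣ nextMultiple c t := dvd_mul_right _ _

theorem le_nextMultiple {c : ℕ} (hc : 0 < c) (t : ℝ) : t ≤ nextMultiple c t := by
  have hc' : (0 : ℝ) < c := by exact_mod_cast hc
  have := Int.le_ceil (t / c)
  rw [div_le_iff₀ hc'] at this
  simp only [nextMultiple, Int.cast_mul, Int.cast_natCast]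
  linarith

theorem nextMultiple_lt {c : ℕ} (hc : 0 < c) (t : ℝ) : (nextMultiple c t : ℝ) < t + c := by
  have hc' : (0 : ℝ) < c := by exact_mod_cast hc
  have := mul_lt_mul_of_pos_right (Int.ceil_lt_add_one (t / c)) hc'
  rw [add_mul, div_mul_cancel₀ _ hc'.ne', one_mul] at this
  simp only [nextMultiple, Int.cast_mul, Int.cast_natCast]
  linarith

noncomputable def multiplesIn (c : ℕ) (x y : ℝ) : Finset ℤ :=
  (Ioo ⌊x⌋ ⌈y⌉).filter ((c : ℤ) ∣ ·)

theorem mem_multiplesIn {c : ℕ} {x y : ℝ} {b : ℤ} :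
    b ∈ multiplesIn c x y ↔ (c : ℤ) ∣ b ∧ x < b ∧ (b : ℝ) < y := by
  simp [multiplesIn, Int.floor_lt, Int.lt_ceil, and_comm, and_assoc]

section Straddle

variable {x : ℝ} {a c : ℕ}

theorem nextMultiple_mem_multiplesIn (hc : 0 < c) (hca : c ≤ a) :
    nextMultiple c (x + a) ∈ multiplesIn c x (x + 2 * a) := by
  have : (c : ℝ) ≤ a := by exact_mod_cast hca
  have : (0 : ℝ) < c := by exact_mod_cast hc
  have := le_nextMultiple hc (x + a)
  have := nextMultiple_lt hc (x + a)
  exact mem_multiplesIn.2 ⟨dvd_nextMultiple _ _, by linarith, by linarith⟩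

theorem nextMultiple_sub_mem_multiplesIn (hc : 0 < c) (h : x + c < nextMultiple c (x + a)) :
    nextMultiple c (x + a) - c ∈ multiplesIn c x (x + 2 * a) := by
  have : (0 : ℝ) ≤ a := a.cast_nonneg
  have := nextMultiple_lt hc (x + a)
  refine mem_multiplesIn.2 ⟨dvd_sub (dvd_nextMultiple _ _) dvd_rfl, ?_, ?_⟩ <;> push_cast <;>
    linarith

theorem eq_of_nextMultiple_le (hc : 0 < c) (hca : c ≤ a)
    (h : (nextMultiple c (x + a) : ℝ) ≤ x + c) : c = a := by
  have := le_nextMultiple hc (x + a)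
  have : (a : ℝ) ≤ c := by linarith
  exact le_antisymm hca (by exact_mod_cast this)

noncomputable def straddlingPair (x : ℝ) (a c : ℕ) : ℤ × ℤ :=
  (nextMultiple c (x + a) - c, nextMultiple c (x + a))

theorem straddlingPair_injective (x : ℝ) (a : ℕ) : Injective (straddlingPair x a) := by
  intro c c' h
  simp only [straddlingPair, Prod.mk.injEq] at h
  omega

variable {F : Finset ℕ} {N : Finset ℤ}

theorem exists_mem_product_forall_straddlingPair_ne (hF : ∀ c ∈ F, 0 < c ∧ c ≤ a)
    (hN : ∀ c ∈ F, multiplesIn c x (x + 2 * a) ⊆ N) (haF : a ∈ F)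
    (hwa : (nextMultiple a (x + a) : ℝ) = x + a) {v : ℤ} (hvN : v ∈ N) (hvx : (v : ℝ) < x + a) :
    ∃ pr ∈ N.filter (fun b : ℤ => (b : ℝ) < x + a) ×ˢ
        N.filter (fun b : ℤ => x + a ≤ (b : ℝ)),
      ∀ c ∈ F, x + c < nextMultiple c (x + a) → straddlingPair x a c ≠ pr := by
  set b₀ := nextMultiple a (x + a)
  by_cases hhit : ∃ c₁ ∈ F, x + c₁ < nextMultiple c₁ (x + a) ∧ straddlingPair x a c₁ = (v, b₀)
  · -- Then `c₁ = b₀ - v` divides `b₀`, so it has a multiple `y ∈ [v + a, x + 2a)`. A `c ≤ a`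
    -- with straddling pair `(v, y)` would be `y - v ≥ a`, i.e. `a`, whose pair ends at `b₀ < y`.
    obtain ⟨c₁, hc₁F, hc₁, hpair⟩ := hhit
    simp only [straddlingPair, Prod.mk.injEq] at hpair
    obtain ⟨hc₁pos, -⟩ := hF c₁ hc₁F
    set y := nextMultiple c₁ (v + a)
    have hxv : x < v := by rw [← hpair.1]; push_cast; linarith
    have hvy := le_nextMultiple hc₁pos (v + a)
    have hyb : (y : ℝ) < v + a + c₁ := nextMultiple_lt hc₁pos (v + a)
    have hb₀ : (b₀ : ℝ) = v + c₁ := by rw [← hpair.2]; push_cast [← hpair.1]; ring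
    have hyN : y ∈ N := hN c₁ hc₁F <|
      mem_multiplesIn.2 ⟨dvd_nextMultiple _ _, by linarith, by linarith⟩
    refine ⟨(v, y), mem_product.2 ⟨mem_filter.2 ⟨hvN, hvx⟩, mem_filter.2 ⟨hyN, by linarith⟩⟩,
      fun c hcF _ hc => ?_⟩
    simp only [straddlingPair, Prod.mk.injEq] at hc
    have hcy : (c : ℝ) = y - v := by exact_mod_cast (by omega : (c : ℤ) = y - v)
    obtain rfl : c = a := le_antisymm (hF c hcF).2 (by exact_mod_cast (by linarith : (a : ℝ) ≤ c))
    have : (y : ℝ) = b₀ := by rw [← hc.2]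
    linarith
  · push Not at hhit
    refine ⟨(v, b₀), mem_product.2 ⟨mem_filter.2 ⟨hvN, hvx⟩, mem_filter.2 ⟨?_, hwa.ge⟩⟩,
      fun c hcF hc => hhit c hcF hc⟩
    exact hN a haF (nextMultiple_mem_multiplesIn (hF a haF).1 le_rfl)

theorem straddlingPair_mem_product (hc : 0 < c) (hca : c ≤ a)
    (hN : multiplesIn c x (x + 2 * a) ⊆ N) (h : x + c < nextMultiple c (x + a)) :
    straddlingPair x a c ∈
      N.filter (fun b : ℤ => (b : ℝ) < x + a) ×ˢ N.filter (fun b : ℤ => x + a ≤ (b : ℝ)) := by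
  have := nextMultiple_lt hc (x + a)
  refine mem_product.2 ⟨mem_filter.2 ⟨hN (nextMultiple_sub_mem_multiplesIn hc h), ?_⟩,
    mem_filter.2 ⟨hN (nextMultiple_mem_multiplesIn hc hca), le_nextMultiple hc _⟩⟩
  simp only [straddlingPair]
  push_cast
  linarith

theorem card_le_card_mul_card_or_card_le_one_of_nextMultiple_eq (hF : ∀ c ∈ F, 0 < c ∧ c ≤ a)
    (hN : ∀ c ∈ F, multiplesIn c x (x + 2 * a) ⊆ N) (haF : a ∈ F)
    (hwa : (nextMultiple a (x + a) : ℝ) = x + a) :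
    #F ≤ #(N.filter fun b : ℤ => (b : ℝ) < x + a) * #(N.filter fun b : ℤ => x + a ≤ (b : ℝ)) ∨
      #F ≤ 1 := by
  set L := N.filter fun b : ℤ => (b : ℝ) < x + a
  set U := N.filter fun b : ℤ => x + a ≤ (b : ℝ)
  have herase : ∀ c ∈ F.erase a, x + c < nextMultiple c (x + a) := fun c hc => by
    obtain ⟨hca, hcF⟩ := mem_erase.1 hc
    by_contra! h
    exact hca (eq_of_nextMultiple_le (hF c hcF).1 (hF c hcF).2 h)
  have himage : (F.erase a).image (straddlingPair x a) ⊆ L ×ˢ U := by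
    simp only [image_subset_iff]
    exact fun c hc => straddlingPair_mem_product (hF c (mem_of_mem_erase hc)).1
      (hF c (mem_of_mem_erase hc)).2 (hN c (mem_of_mem_erase hc)) (herase c hc)
  have hcard : #F = #((F.erase a).image (straddlingPair x a)) + 1 := by
    rw [card_image_of_injective _ (straddlingPair_injective x a), card_erase_add_one haF]
  rcases L.eq_empty_or_nonempty with hL | ⟨v, hv⟩
  · right
    rw [hL, empty_product, subset_empty] at himage
    simp [hcard, himage]
  · left
    obtain ⟨pr, hpr, hne⟩ := exists_mem_product_forall_straddlingPair_ne hF hN haF hwa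
      (mem_filter.1 hv).1 (mem_filter.1 hv).2
    have : pr ∉ (F.erase a).image (straddlingPair x a) := by
      simp only [mem_image, not_exists, not_and]
      exact fun c hc => hne c (mem_of_mem_erase hc) (herase c hc)
    rw [← card_product]
    have := card_lt_card ((ssubset_iff_of_subset himage).2 ⟨pr, hpr, this⟩)
    omega

theorem card_le_card_mul_card_or_card_le_one (hF : ∀ c ∈ F, 0 < c ∧ c ≤ a)
    (hN : ∀ c ∈ F, multiplesIn c x (x + 2 * a) ⊆ N) :
    #F ≤ #(N.filter fun b : ℤ => (b : ℝ) < x + a) * #(N.filter fun b : ℤ => x + a ≤ (b : ℝ)) ∨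
      #F ≤ 1 := by
  by_cases hnormal : ∀ c ∈ F, x + c < nextMultiple c (x + a)
  · left
    rw [← card_product]
    exact card_le_card_of_injOn _
      (fun c hc => straddlingPair_mem_product (hF c hc).1 (hF c hc).2 (hN c hc) (hnormal c hc))
      (straddlingPair_injective x a).injOn
  push Not at hnormal
  obtain ⟨a', ha'F, ha'⟩ := hnormal
  obtain rfl : a = a' := (eq_of_nextMultiple_le (hF a' ha'F).1 (hF a' ha'F).2 ha').symm
  exact card_le_card_mul_card_or_card_le_one_of_nextMultiple_eq hF hN ha'F
    (le_antisymm ha' (le_nextMultiple (hF a ha'F).1 _))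

end Straddle

theorem le_add_sub_of_le_mul_or_le_one {n m s p q : ℕ} (hnm : n ≤ m) (hsm : s ≤ m)
    (hs : (s - 1) ^ 2 < 4 * m) (hpq : 1 ≤ p + q) (hn : n ≤ p * q ∨ n ≤ 1) :
    n ≤ p + q + (m - s) := by
  rcases hn with hn | hn
  · rcases le_or_gt s (p + q) with h | h
    · omega
    obtain ⟨t, rfl⟩ : ∃ t, s = t + 1 := ⟨s - 1, by omega⟩
    rw [Nat.add_sub_cancel] at hs
    have : (p * q + t : ℤ) < p + q + m := by
      nlinarith [sq_nonneg ((p : ℤ) - q), sq_nonneg ((p : ℤ) + q - t)]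
    have : p * q + t < p + q + m := by exact_mod_cast this
    omega
  · omega

theorem card_le_card_biUnion_multiplesIn_add {m s : ℕ} (hsm : s ≤ m) (hs : (s - 1) ^ 2 < 4 * m)
    {A : Finset ℕ} (hA : #A = m) (hpos : ∀ a ∈ A, 0 < a) (x : ℝ) {F : Finset ℕ} (hFA : F ⊆ A) :
    #F ≤ #(F.biUnion (multiplesIn · x (x + 2 * (A.sup id : ℕ)))) + (m - s) := by
  rcases F.eq_empty_or_nonempty with rfl | ⟨c₀, hc₀⟩
  · simp
  set a := A.sup id
  set N := F.biUnion (multiplesIn · x (x + 2 * a))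
  have hF : ∀ c ∈ F, 0 < c ∧ c ≤ a := fun c hc => ⟨hpos c (hFA hc), le_sup (f := id) (hFA hc)⟩
  have hN : ∀ c ∈ F, multiplesIn c x (x + 2 * a) ⊆ N := fun c hc =>
    subset_biUnion_of_mem (fun c => multiplesIn c x (x + 2 * a)) hc
  have hsplit := card_filter_add_card_filter_not (s := N) fun b : ℤ => (b : ℝ) < x + a
  simp only [not_lt] at hsplit
  have hNpos : 0 < #N :=
    card_pos.2 ⟨_, hN c₀ hc₀ (nextMultiple_mem_multiplesIn (hF c₀ hc₀).1 (hF c₀ hc₀).2)⟩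
  rw [← hsplit] at hNpos ⊢
  exact le_add_sub_of_le_mul_or_le_one ((card_le_card hFA).trans hA.le) hsm hs hNpos
    (card_le_card_mul_card_or_card_le_one hF hN)

theorem matchProp_of_sq_lt {m s : ℕ} (hsm : s ≤ m) (hs : (s - 1) ^ 2 < 4 * m) :
    MatchProp m s := by
  intro A hA hpos x
  obtain ⟨c, b, hc, hb, hcb⟩ := exists_matching_of_card_le_card_biUnion_add
    (fun c : A => multiplesIn c x (x + 2 * (A.sup id : ℕ))) (d := m - s) (r := s)
    (by rw [Fintype.card_coe, hA]; omega) fun G => by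
      have := card_le_card_biUnion_multiplesIn_add hsm hs hA hpos x
        (F := G.image Subtype.val) (fun c hc => by obtain ⟨c, -, rfl⟩ := mem_image.1 hc; exact c.2)
      rwa [image_biUnion, card_image_of_injective _ Subtype.val_injective] at this
  refine ⟨fun k => c k, b, Subtype.val_injective.comp hc, hb, fun k => ?_⟩
  obtain ⟨hdvd, hx, hxa⟩ := mem_multiplesIn.1 (hcb k)
  exact ⟨(c k).2, hdvd, hx, hxa⟩

theorem eq_or_eq_add_of_dvd_sub {M r b : ℤ} (h : M ∣ b - r) (h₁ : r - M < b)
    (h₂ : b < r + 2 * M) : b = r ∨ b = r + M := by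
  obtain ⟨d, hd⟩ := h
  have hM : 0 < M := by linarith
  have : -1 < d := by nlinarith
  have : d < 2 := by nlinarith
  interval_cases d
  · exact .inl (by linarith)
  · exact .inr (by linarith)

theorem pairwise_coprime_mul_factorial_add_one (K m : ℕ) :
    (range m : Set ℕ).Pairwise (Nat.Coprime on fun n => (K + n) * m.factorial + 1) := by
  intro i hi j hj hij
  wlog hlt : i < j generalizing i j
  · exact (this hj hi hij.symm (by omega)).symm
  simp only [coe_range, Set.mem_Iio] at hj
  exact Nat.coprime_mul_succ <| by
    rw [Nat.add_sub_add_left]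
    exact Nat.dvd_factorial (by omega) (by omega)

theorem mem_image_union_image_of_dvd {m p q K T X n : ℕ} {b : ℤ} (hp : 0 < p) (hmpq : m ≤ p * q)
    (hK : p + 2 * m ≤ K) (hn : n < m)
    (hX : (((K + n) * T + 1 : ℕ) : ℤ) ∣ X - (T * (n % p) : ℕ))
    (hb : (((K + n) * T + 1 : ℕ) : ℤ) ∣ b) (hlo : (X : ℤ) - (K * T + 1) < b)
    (hhi : b < (X : ℤ) - (K * T + 1) + 2 * ((K + m) * T + 1)) :
    b ∈ (range p).image (fun i : ℕ => (X : ℤ) - T * i) ∪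
      (range q).image (fun j : ℕ => (X : ℤ) + (K * T + 1) + T * p * j) := by
  have hnij := Nat.mod_add_div n p
  have hi : n % p < p := Nat.mod_lt n hp
  generalize n % p = i at *
  generalize n / p = j at *
  subst hnij
  have hj : j < q := by nlinarith
  push_cast at hX hb
  have : (T : ℤ) * i ≤ T * p := by gcongr
  have : (p : ℤ) + 2 * m ≤ K := by exact_mod_cast hK
  have : (0 : ℤ) ≤ T * i := by positivity
  have : (0 : ℤ) ≤ (i + p * j) * T := by positivity
  rcases eq_or_eq_add_of_dvd_sub (dvd_sub hb hX) (by linarith) (by nlinarith) with h | h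
  · exact mem_union_left _ (mem_image.2 ⟨i, mem_range.2 hi, h.symm⟩)
  · exact mem_union_right _ (mem_image.2 ⟨j, mem_range.2 hj, by rw [h]; ring⟩)

theorem not_matchProp_add_add_one {m p q : ℕ} (hp : 0 < p) (hmpq : m ≤ p * q) :
    ¬ MatchProp m (p + q + 1) := by
  intro hMP
  set T := m.factorial
  set K := p + 2 * m
  obtain ⟨X, hX⟩ := Nat.chineseRemainderOfFinset (fun n => T * (n % p))
    (fun n => (K + n) * T + 1) (range m) (fun _ _ => Nat.succ_ne_zero _)
    (pairwise_coprime_mul_factorial_add_one K m)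
  set A := (range m).image fun n => (K + n) * T + 1
  have hmono : StrictMono fun n => (K + n) * T + 1 := fun u v huv =>
    Nat.succ_lt_succ (Nat.mul_lt_mul_of_pos_right (by omega) (Nat.factorial_pos m))
  have hA : #A = m := by rw [card_image_of_injective _ hmono.injective, card_range]
  have hsup : A.sup id ≤ (K + m) * T + 1 := Finset.sup_le fun c hc => by
    obtain ⟨n, hn, rfl⟩ := mem_image.1 hc
    exact hmono.monotone (by simp at hn; omega)
  obtain ⟨c, b, -, hb, hcb⟩ := hMP A hA (by simp [A]) ((X - (K * T + 1) : ℤ) : ℝ)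
  set B := (range p).image (fun i : ℕ => (X : ℤ) - T * i) ∪
    (range q).image (fun j : ℕ => (X : ℤ) + (K * T + 1) + T * p * j)
  have hbB (k : Fin (p + q + 1)) : b k ∈ B := by
    obtain ⟨hcA, hdvd, hlo, hhi⟩ := hcb k
    obtain ⟨n, hn, hcn⟩ := mem_image.1 hcA
    rw [← hcn] at hdvd
    have hhi' : b k < (X : ℤ) - (K * T + 1) + 2 * (A.sup id : ℕ) := by exact_mod_cast hhi
    have hsup' : ((A.sup id : ℕ) : ℤ) ≤ (K + m) * T + 1 := by exact_mod_cast hsup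
    exact mem_image_union_image_of_dvd hp hmpq le_rfl (mem_range.1 hn) (hX n hn).symm.dvd hdvd
      (by exact_mod_cast hlo) (by linarith)
  have hcard := card_le_card_of_injOn (s := univ) b (fun k _ => hbB k) hb.injOn
  have hB : #B ≤ p + q := (card_union_le _ _).trans (add_le_add
    (card_image_le.trans (card_range p).le) (card_image_le.trans (card_range q).le))
  simp only [card_univ, Fintype.card_fin] at hcard
  omega

theorem MatchProp.mono {m r r' : ℕ} (h : MatchProp m r) (hr : r' ≤ r) : MatchProp m r' := by
  intro A hA hpos x
  obtain ⟨c, b, hc, hb, hcb⟩ := h A hA hpos x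
  exact ⟨c ∘ Fin.castLE hr, b ∘ Fin.castLE hr, hc.comp (Fin.castLE_injective hr),
    hb.comp (Fin.castLE_injective hr), fun i => hcb _⟩

theorem not_matchProp_add_one_of_le_sq {m s : ℕ} (hm : 0 < m) (hs : 4 * m ≤ s ^ 2) :
    ¬ MatchProp m (s + 1) := by
  have hpq : m ≤ s / 2 * (s - s / 2) := by
    rcases Nat.even_or_odd' s with ⟨p, rfl | rfl⟩
    · rw [show 2 * p / 2 = p by omega, show 2 * p - p = p by omega]; nlinarith
    · rw [show (2 * p + 1) / 2 = p by omega, show 2 * p + 1 - p = p + 1 by omega]; nlinarith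
  have := not_matchProp_add_add_one (q := s - s / 2) (by nlinarith) hpq
  rwa [show s / 2 + (s - s / 2) = s by omega] at this

theorem four_mul_le_ceil_two_mul_sqrt_sq (m : ℕ) : 4 * m ≤ ⌈2 * √(m : ℝ)⌉₊ ^ 2 := by
  have h := Nat.le_ceil (2 * √(m : ℝ))
  have : (4 * m : ℝ) ≤ (⌈2 * √(m : ℝ)⌉₊ : ℝ) ^ 2 := by
    nlinarith [Real.sq_sqrt m.cast_nonneg, Real.sqrt_nonneg (m : ℝ)]
  exact_mod_cast this

theorem ceil_two_mul_sqrt_sub_one_sq_lt {m : ℕ} (hm : 0 < m) :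
    (⌈2 * √(m : ℝ)⌉₊ - 1) ^ 2 < 4 * m := by
  have h : ((⌈2 * √(m : ℝ)⌉₊ - 1 : ℕ) : ℝ) < 2 * √(m : ℝ) :=
    Nat.lt_ceil.1 (Nat.sub_lt (Nat.ceil_pos.2 (by positivity)) one_pos)
  have : ((⌈2 * √(m : ℝ)⌉₊ - 1 : ℕ) : ℝ) ^ 2 < 4 * m := by
    nlinarith [Real.sq_sqrt m.cast_nonneg, Nat.cast_nonneg (α := ℝ) (⌈2 * √(m : ℝ)⌉₊ - 1)]
  exact_mod_cast this

theorem ceil_two_mul_sqrt_le {m : ℕ} (hm : 4 ≤ m) : ⌈2 * √(m : ℝ)⌉₊ ≤ m := by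
  have h2 : 2 ≤ √(m : ℝ) := Real.le_sqrt_of_sq_le (by norm_num; exact_mod_cast hm)
  exact Nat.ceil_le.2 (by nlinarith [Real.sq_sqrt m.cast_nonneg])

theorem erdos_f_eq_ge4 (m : ℕ) (hm : 4 ≤ m) :
    f m = ⌈2 * Real.sqrt m⌉₊ := by
  refine IsGreatest.csSup_eq ⟨matchProp_of_sq_lt (ceil_two_mul_sqrt_le hm)
    (ceil_two_mul_sqrt_sub_one_sq_lt (by omega)), fun r hr => ?_⟩
  by_contra! h
  exact not_matchProp_add_one_of_le_sq (by omega) (four_mul_le_ceil_two_mul_sqrt_sq m) (hr.mono h)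
end

section
/- Let s ≤ t be integers with s, t ≥ 2, let D = lcm(1, 2, ..., st), and let α_{i,j} = M + i + jD for 1 ≤ i ≤ s, 1 ≤ j ≤ t, where M is an integer such that no prime p > st divides any α_{i,j}, provided p divides q + rD for some integers q, r with 0 < |q| < s and |r| < t. Then for all such indices, gcd(α_{i,j}, α_{k,l}) divides i − k. -/
/-!
Write `α = α_{i,j}`, `β = α_{k,l}` and `g = gcd(α, β)`. Then `g ∣ α - β = q + rD` with `q = i - k`,
`r = j - l`, so the hypothesis on `M` forces every prime factor of `g` to be at most `st`.
Such a `g` divides `D`, by induction on prime powers: if `p ^ (k + 1) ∣ g` and `p ^ k ∣ D`, then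
`p ^ k ∣ q`, so `p ^ k < s`; for `k ≥ 1` also `p < s`, whence `p ^ (k + 1) < s² ≤ st`, while for
`k = 0` we have `p ≤ st` directly. Either way `p ^ (k + 1) ∣ D`. Hence `g ∣ q`.
-/

lemma pow_dvd_of_dvd_add_mul {p n s g D : ℕ} {q r : ℤ} (hp : p.Prime)
    (hD : ∀ m, 0 < m → m ≤ n → m ∣ D) (hsn : s * s ≤ n) (hq0 : q ≠ 0) (hqs : |q| < s)
    (hpn : p ∣ g → p ≤ n) (hg : (g : ℤ) ∣ q + r * D) (k : ℕ) (hk : p ^ k ∣ g) :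
    p ^ k ∣ D := by
  induction k with
  | zero => simp
  | succ k ih =>
    have hkg : p ^ k ∣ g := (pow_dvd_pow p k.le_succ).trans hk
    have hkq : ((p ^ k : ℕ) : ℤ) ∣ q :=
      (dvd_add_left ((Int.natCast_dvd_natCast.2 (ih hkg)).mul_left r)).mp
        ((Int.natCast_dvd_natCast.2 hkg).trans hg)
    have hks : p ^ k < s := by
      exact_mod_cast (Int.le_of_dvd (abs_pos.2 hq0) ((dvd_abs _ _).2 hkq)).trans_lt hqs
    refine hD _ (pow_pos hp.pos _) ?_
    rcases k.eq_zero_or_pos with rfl | hk0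
    · simpa using hpn (by simpa using hk)
    · calc p ^ (k + 1) = p ^ k * p := pow_succ p k
        _ ≤ s * s := Nat.mul_le_mul hks.le ((Nat.le_self_pow hk0.ne' p).trans hks.le)
        _ ≤ n := hsn

lemma dvd_of_dvd_add_mul_of_prime_le {n s g D : ℕ} {q r : ℤ}
    (hD : ∀ m, 0 < m → m ≤ n → m ∣ D) (hsn : s * s ≤ n) (hq0 : q ≠ 0) (hqs : |q| < s)
    (hpn : ∀ p, p.Prime → p ∣ g → p ≤ n) (hg : (g : ℤ) ∣ q + r * D) : (g : ℤ) ∣ q := by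
  have hgD : g ∣ D := (Nat.dvd_iff_prime_pow_dvd_dvd D g).2 fun p k hp =>
    pow_dvd_of_dvd_add_mul hp hD hsn hq0 hqs (hpn p hp) hg k
  exact (dvd_add_left ((Int.natCast_dvd_natCast.2 hgD).mul_left r)).mp hg

theorem gcd_alpha_dvd_general (s t : ℕ) (hst : s ≤ t)
    (D : ℕ) (hD : D = (Finset.Icc 1 (s * t)).lcm id)
    (M : ℤ)
    (hM : ∀ p : ℕ, p.Prime → s * t < p →
      (∃ q r : ℤ, 0 < |q| ∧ |q| < s ∧ |r| < t ∧ (p : ℤ) ∣ q + r * D) →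
      ∀ i j : ℕ, 1 ≤ i → i ≤ s → 1 ≤ j → j ≤ t →
        ¬ ((p : ℤ) ∣ M + i + j * D)) :
    ∀ i j k l : ℕ, 1 ≤ i → i ≤ s → 1 ≤ j → j ≤ t → 1 ≤ k → k ≤ s → 1 ≤ l → l ≤ t →
      (Int.gcd (M + i + j * D) (M + k + l * D) : ℤ) ∣ (i : ℤ) - k := by
  intro i j k l hi hi' hj hj' hk hk' hl hl'
  rcases eq_or_ne (i : ℤ) k with hik | hik
  · simp [hik]
  set g := Int.gcd (M + i + j * D) (M + k + l * D)
  have hg : (g : ℤ) ∣ (i - k : ℤ) + (j - l : ℤ) * D := by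
    have hsub : (M + i + j * D) - (M + k + l * D) = (i - k : ℤ) + (j - l : ℤ) * D := by ring
    exact hsub ▸ dvd_sub (Int.gcd_dvd_left _ _) (Int.gcd_dvd_right _ _)
  have hq : |(i - k : ℤ)| < s := abs_sub_lt_iff.2 ⟨by omega, by omega⟩
  have hr : |(j - l : ℤ)| < t := abs_sub_lt_iff.2 ⟨by omega, by omega⟩
  refine dvd_of_dvd_add_mul_of_prime_le (n := s * t) ?_ (Nat.mul_le_mul_left s hst)
    (sub_ne_zero.2 hik) hq ?_ hg
  · intro m hm hmn
    exact hD ▸ Finset.dvd_lcm (Finset.mem_Icc.2 ⟨hm, hmn⟩)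
  · intro p hp hpg
    by_contra! hlt
    have hpg' : (p : ℤ) ∣ g := Int.natCast_dvd_natCast.2 hpg
    exact hM p hp hlt ⟨_, _, abs_pos.2 (sub_ne_zero.2 hik), hq, hr, hpg'.trans hg⟩
      i j hi hi' hj hj' (hpg'.trans (Int.gcd_dvd_left _ _))

/-- Claim: `gcd(α_{i,j}, α_{k,l}) ∣ i - k` for `α_{i,j} = M + i + j * D`. -/
theorem gcd_alpha_dvd (s t : ℕ) (hs : 2 ≤ s) (hst : s ≤ t)
    (D : ℕ) (hD : D = (Finset.Icc 1 (s * t)).lcm id)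
    (M : ℤ)
    (hM : ∀ p : ℕ, p.Prime → s * t < p →
      (∃ q r : ℤ, 0 < |q| ∧ |q| < s ∧ |r| < t ∧ (p : ℤ) ∣ q + r * D) →
      ∀ i j : ℕ, 1 ≤ i → i ≤ s → 1 ≤ j → j ≤ t →
        ¬ ((p : ℤ) ∣ M + i + j * D)) :
    ∀ i j k l : ℕ, 1 ≤ i → i ≤ s → 1 ≤ j → j ≤ t → 1 ≤ k → k ≤ s → 1 ≤ l → l ≤ t →
      (Int.gcd (M + i + j * D) (M + k + l * D) : ℤ) ∣ (i : ℤ) - k :=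
  gcd_alpha_dvd_general s t hst D hD M hM
end

section
/- Let s ≤ t be integers with 2 ≤ s ≤ t, D = lcm(1, ..., st), and q, r integers with 0 < |q| < s and |r| < t. If p is a prime with p ≤ st that divides q + rD, then v_p(D) > v_p(q) and consequently v_p(q + rD) = v_p(q), where v_p denotes the p-adic valuation. -/
/-- If a prime `p ≤ st` divides `q + r * D` where `D = lcm(1, ..., st)`,
`0 < |q| < s` and `|r| < t`, then `v_p(D) > v_p(q)` and `v_p(q + r * D) = v_p(q)`. -/
theorem valuation_eq (s t : ℕ) (hs : 2 ≤ s) (hst : s ≤ t)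
    (D : ℕ) (hD : D = (Finset.Icc 1 (s * t)).lcm id)
    (q r : ℤ) (hq0 : 0 < |q|) (hqs : |q| < s) (hrt : |r| < t)
    (p : ℕ) (hp : p.Prime) (hple : p ≤ s * t) (hpdvd : (p : ℤ) ∣ q + r * D) :
    padicValInt p q < padicValInt p (D : ℤ) ∧
      padicValInt p (q + r * D) = padicValInt p q := by
  haveI : Fact p.Prime := ⟨hp⟩
  have hq : q ≠ 0 := by rw [← abs_pos]; exact hq0
  set k := padicValInt p q with hk
  -- p^k divides q
  have hpk : (p : ℤ) ^ k ∣ q := padicValInt_dvd q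
  have hpk1 : ¬ (p : ℤ) ^ (k + 1) ∣ q := by
    rw [padicValInt_dvd_iff]
    push_neg
    exact ⟨hq, by omega⟩
  -- p^k ≤ |q| < s
  have hpkle : (p : ℤ) ^ k < s := lt_of_le_of_lt (Int.le_of_dvd hq0 ((dvd_abs _ _).mpr hpk)) hqs
  -- p^(k+1) ≤ s*t
  have hkey : p ^ (k + 1) ≤ s * t := by
    rcases Nat.eq_zero_or_pos k with h0 | h0
    · simpa [h0] using hple
    · have hpk' : p ^ k < s := by exact_mod_cast hpkle
      have hps : p < s := lt_of_le_of_lt (Nat.le_self_pow (by omega) p) hpk'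
      have : p ^ k * p < s * t := Nat.mul_lt_mul_of_lt_of_le hpk' (by omega) (by omega)
      calc p ^ (k + 1) = p ^ k * p := by ring
        _ ≤ s * t := this.le
  -- p^(k+1) divides D
  have hdvdD : (p : ℤ) ^ (k + 1) ∣ (D : ℤ) := by
    have h1 : p ^ (k + 1) ∣ D := by
      rw [hD]
      exact Finset.dvd_lcm (by
        simp only [Finset.mem_Icc]
        exact ⟨Nat.one_le_pow _ _ hp.pos, hkey⟩)
    exact_mod_cast h1
  have hDne : (D : ℤ) ≠ 0 := by
    simp only [Ne, Int.natCast_eq_zero, hD, Finset.lcm_eq_zero_iff, Set.mem_image,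
      Finset.mem_coe, Finset.mem_Icc, id_eq]
    rintro ⟨x, ⟨hx1, _⟩, hx0⟩
    omega
  have hvD : k < padicValInt p (D : ℤ) := by
    have := (padicValInt_dvd_iff (k + 1) (D : ℤ)).mp hdvdD
    rcases this with h | h
    · exact absurd h hDne
    · omega
  refine ⟨hvD, ?_⟩
  -- valuation of the sum
  have hsum_dvd : (p : ℤ) ^ k ∣ q + r * D :=
    dvd_add hpk (Dvd.dvd.mul_left (dvd_trans (pow_dvd_pow _ (Nat.le_succ k)) hdvdD) r)
  have hsum_ndvd : ¬ (p : ℤ) ^ (k + 1) ∣ q + r * D := by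
    intro h
    exact hpk1 (by
      have : (p : ℤ) ^ (k + 1) ∣ r * D := Dvd.dvd.mul_left hdvdD r
      have := dvd_sub h this
      simpa using this)
  have hsumne : q + r * D ≠ 0 := fun h => hsum_ndvd (h ▸ dvd_zero _)
  have h1 := (padicValInt_dvd_iff k (q + r * D)).mp hsum_dvd
  have h2 : ¬ (q + r * D = 0 ∨ k + 1 ≤ padicValInt p (q + r * D)) := by
    rw [← padicValInt_dvd_iff]; exact hsum_ndvd
  push_neg at h2
  omega
end

section
/- Let A be a finite set of positive integers with maximum element a_m, let x be a real number that is not an integer multiple of a_m, and set B_− = (x, x + a_m] ∩ ℤ and B_+ = (x + a_m, x + 2a_m) ∩ ℤ. For each a ∈ A, let u_a be the largest multiple of a in B_−. Then the map a ↦ (u_a, u_a + a) is a well-defined injection from A into B_− × B_+ whose image consists of pairs of multiples of a. -/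
/-- If `x` is not an integer multiple of `max A`, then, with `u a` the largest multiple
of `a` in `B₋ = (x, x + max A] ∩ ℤ`, the map `a ↦ (u a, u a + a)` is a well-defined
injection from `A` into `B₋ × B₊`, where `B₊ = (x + max A, x + 2 max A) ∩ ℤ`, and both
coordinates of the image are multiples of `a`. -/
theorem injection_case1 (A : Finset ℕ) (hA : A.Nonempty) (hpos : ∀ a ∈ A, 0 < a)
    (x : ℝ) (hx : ¬ ∃ k : ℤ, x = (k : ℝ) * (A.max' hA : ℕ)) :
    ∃ u : ℕ → ℤ,
      (∀ a ∈ A,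
        (a : ℤ) ∣ u a ∧ x < (u a : ℝ) ∧ (u a : ℝ) ≤ x + (A.max' hA : ℕ) ∧
        (∀ b : ℤ, (a : ℤ) ∣ b → x < (b : ℝ) → (b : ℝ) ≤ x + (A.max' hA : ℕ) → b ≤ u a)) ∧
      Set.InjOn (fun a : ℕ => ((u a, u a + a) : ℤ × ℤ)) A ∧
      (∀ a ∈ A, (a : ℤ) ∣ u a + a ∧
        x + (A.max' hA : ℕ) < ((u a + a : ℤ) : ℝ) ∧
        ((u a + a : ℤ) : ℝ) < x + 2 * (A.max' hA : ℕ)) := by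
  set M : ℕ := A.max' hA with hM
  have hMA : M ∈ A := A.max'_mem hA
  have hMpos : 0 < (M : ℝ) := by exact_mod_cast hpos M hMA
  have key : ∀ a ∈ A,
      (a : ℝ) * (⌊(x + M) / a⌋ : ℝ) ≤ x + M ∧ x + M - a < (a : ℝ) * (⌊(x + M) / a⌋ : ℝ) := by
    intro a ha
    have hapos : 0 < (a : ℝ) := by exact_mod_cast hpos a ha
    constructor
    · rw [mul_comm]
      calc (⌊(x + M) / a⌋ : ℝ) * a ≤ ((x + M) / a) * a :=
            mul_le_mul_of_nonneg_right (Int.floor_le _) hapos.le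
        _ = x + M := div_mul_cancel₀ _ hapos.ne'
    · have h1 : (x + M) / a - 1 < (⌊(x + M) / a⌋ : ℝ) := Int.sub_one_lt_floor _
      have := (mul_lt_mul_iff_right₀ hapos).mpr h1
      calc x + M - a = (a : ℝ) * ((x + M) / a - 1) := by field_simp
        _ < _ := this
  refine ⟨fun a => (a : ℤ) * ⌊(x + M) / a⌋, ?_, ?_, ?_⟩
  · intro a ha
    have hapos : 0 < (a : ℝ) := by exact_mod_cast hpos a ha
    have haM : (a : ℝ) ≤ M := by exact_mod_cast Finset.le_max' A a ha
    obtain ⟨hle, hgt⟩ := key a ha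
    refine ⟨Dvd.intro _ rfl, ?_, ?_, ?_⟩
    · push_cast; linarith
    · push_cast; linarith
    · intro b hdvd _ hble
      obtain ⟨k, rfl⟩ := hdvd
      have hk : (k : ℝ) ≤ (x + M) / a := by
        rw [le_div_iff₀ hapos, mul_comm]
        push_cast at hble ⊢
        linarith
      exact mul_le_mul_of_nonneg_left (Int.le_floor.mpr hk) (by exact_mod_cast (hpos a ha).le)
  · intro a ha b hb h
    simp only [Prod.mk.injEq] at h
    have h2 := h.2
    rw [h.1] at h2
    exact_mod_cast add_left_cancel h2
  · intro a ha
    have hapos : 0 < (a : ℝ) := by exact_mod_cast hpos a ha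
    have haM : (a : ℝ) ≤ M := by exact_mod_cast Finset.le_max' A a ha
    obtain ⟨hle, hgt⟩ := key a ha
    refine ⟨Dvd.dvd.add (Dvd.intro _ rfl) (dvd_refl _), by push_cast; linarith, ?_⟩
    rcases lt_or_eq_of_le haM with h | h
    · push_cast; linarith
    · -- a = M: strict inequality ↑a * ⌊..⌋ < x + M, else x multiple of M
      have hstrict : (a : ℝ) * (⌊(x + M) / a⌋ : ℝ) < x + M := by
        rcases lt_or_eq_of_le hle with h' | h'
        · exact h'
        · exfalso
          apply hx
          have haM' : a = M := by exact_mod_cast h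
          subst haM'
          refine ⟨⌊(x + M) / M⌋ - 1, ?_⟩
          push_cast
          linarith
      push_cast
      linarith
end

section
/- Let A be a finite set of positive integers with maximum a_m, let x be a real number with x ∉ a_m ℤ, and let S ⊆ A. Let Γ(S) be the set of integers b with x < b < x + 2a_m such that some a ∈ S divides b. Then |Γ(S)| ≥ 2√|S|. -/
/-!
Put `c = x + max A`. Every `a ∈ S` has a largest multiple `b ≤ c`, and `b + a > c` is the next
one; both lie in `(x, x + 2 max A)`, where `b < c` when `a = max A` because `c` is not a multiple
of `max A`. So `a ↦ (b, b + a)` maps `S` injectively into `L × R`, where `L` and `R` are the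
parts of `Γ(S)` on either side of `c`, giving `|S| ≤ |L| |R| ≤ (|Γ(S)| / 2)²` by AM-GM.
-/

open Set

lemma two_sqrt_le_add_of_le_mul {s l r : ℕ} (h : s ≤ l * r) : 2 * √(s : ℝ) ≤ l + r := by
  have hsq : (4 * s : ℝ) ≤ (l + r) * (l + r) := by
    have : (s : ℝ) ≤ l * r := by exact_mod_cast h
    nlinarith [sq_nonneg ((l : ℝ) - r)]
  calc 2 * √(s : ℝ) = √(4 * s) := by
        rw [Real.sqrt_mul (by norm_num), show (4 : ℝ) = 2 * 2 by norm_num,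
          Real.sqrt_mul_self (by norm_num)]
    _ ≤ √((l + r) * (l + r)) := Real.sqrt_le_sqrt hsq
    _ = l + r := Real.sqrt_mul_self (by positivity)

lemma two_sqrt_card_le_ncard_of_injOn_prod {α β : Type*} {Γ t : Set β} (hΓ : Γ.Finite)
    {S : Finset α} {f : α → β × β} (hmaps : MapsTo f S ((Γ ∩ t) ×ˢ (Γ \ t)))
    (hinj : InjOn f S) :
    2 * √(S.card : ℝ) ≤ Γ.ncard := by
  have hprod : S.card ≤ (Γ ∩ t).ncard * (Γ \ t).ncard := by
    rw [← ncard_prod, ← ncard_coe_finset, ← hinj.ncard_image]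
    exact ncard_le_ncard hmaps.image_subset ((hΓ.inter_of_left t).prod hΓ.sdiff)
  rw [← ncard_inter_add_ncard_sdiff_eq_ncard Γ t hΓ]
  exact_mod_cast two_sqrt_le_add_of_le_mul hprod

lemma exists_dvd_mem_Ioc (c : ℝ) {a : ℤ} (ha : 0 < a) :
    ∃ b : ℤ, a ∣ b ∧ (b : ℝ) ∈ Ioc (c - a) c := by
  have ha' : (0 : ℝ) < a := by exact_mod_cast ha
  refine ⟨a * ⌊c / a⌋, dvd_mul_right _ _, ?_, ?_⟩
  · have := Int.lt_floor_add_one (c / a)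
    push_cast
    rw [div_lt_iff₀ ha'] at this
    linarith
  · push_cast
    rw [mul_comm, ← le_div_iff₀ ha']
    exact Int.floor_le _

lemma exists_dvd_straddle {a m : ℕ} (ha : 0 < a) (ham : a ≤ m) {x : ℝ}
    (hx : ¬ ∃ k : ℤ, x = k * m) :
    ∃ b : ℤ, (a : ℤ) ∣ b ∧ x < b ∧ (b : ℝ) ≤ x + m ∧ x + m < b + a ∧ (b : ℝ) + a < x + 2 * m := by
  obtain ⟨b, hab, hlo, hhi⟩ := exists_dvd_mem_Ioc (x + m) (Int.natCast_pos.2 ha)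
  push_cast at hlo
  have ham' : (a : ℝ) ≤ m := by exact_mod_cast ham
  have hlt : (a : ℝ) < m ∨ (b : ℝ) < x + m := by
    refine ham'.lt_or_eq.imp_right fun hm => hhi.lt_of_ne fun heq => ?_
    obtain ⟨k, rfl⟩ := hab
    refine hx ⟨k - 1, ?_⟩
    push_cast at heq ⊢
    rw [← hm]
    linarith
  exact ⟨b, hab, by linarith, hhi, by linarith, by rcases hlt with hlt | hlt <;> linarith⟩

/-- If `x` is not an integer multiple of `max A`, then for any `S ⊆ A` the set `Γ(S)`
of integers in `(x, x + 2 max A)` divisible by some element of `S` satisfies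
`|Γ(S)| ≥ 2√|S|`. -/
theorem neighbourhood_lower_bound (A : Finset ℕ) (hA : A.Nonempty)
    (hpos : ∀ a ∈ A, 0 < a)
    (x : ℝ) (hx : ¬ ∃ k : ℤ, x = (k : ℝ) * (A.max' hA : ℕ))
    (S : Finset ℕ) (hS : S ⊆ A) :
    2 * Real.sqrt S.card ≤
      ({b : ℤ | x < (b : ℝ) ∧ (b : ℝ) < x + 2 * (A.max' hA : ℕ) ∧
        ∃ a ∈ S, (a : ℤ) ∣ b}.ncard : ℝ) := by
  set m := A.max' hA
  have hfin : {b : ℤ | x < (b : ℝ) ∧ (b : ℝ) < x + 2 * m ∧ ∃ a ∈ S, (a : ℤ) ∣ b}.Finite :=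
    (finite_Icc ⌈x⌉ ⌊x + 2 * m⌋).subset fun b ⟨hlo, hhi, _⟩ =>
      ⟨Int.ceil_le.2 hlo.le, Int.le_floor.2 hhi.le⟩
  have hstraddle : ∀ a ∈ S, ∃ b : ℤ, (a : ℤ) ∣ b ∧ x < b ∧ (b : ℝ) ≤ x + m ∧ x + m < b + a ∧
      (b : ℝ) + a < x + 2 * m := fun a ha =>
    exists_dvd_straddle (hpos a (hS ha)) (A.le_max' a (hS ha)) hx
  choose! b hdvd hx_lt hle hgt hlt using hstraddle
  refine two_sqrt_card_le_ncard_of_injOn_prod (t := {c : ℤ | (c : ℝ) ≤ x + m})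
    (f := fun a => (b a, b a + a)) hfin ?_ ?_
  · intro a ha
    simp only [mem_prod, mem_inter_iff, mem_sdiff, mem_ofPred_eq, Int.cast_add, Int.cast_natCast]
    have ha0 : (0 : ℝ) ≤ a := Nat.cast_nonneg a
    exact ⟨⟨⟨hx_lt a ha, by linarith [hlt a ha], a, ha, hdvd a ha⟩, hle a ha⟩,
      ⟨⟨by linarith [hle a ha, hgt a ha], hlt a ha, a, ha, dvd_add (hdvd a ha) dvd_rfl⟩,
        (hgt a ha).not_ge⟩⟩
  · intro a _ a' _ h
    simp only [Prod.mk.injEq] at h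
    exact_mod_cast (add_left_cancel (h.1 ▸ h.2) : (a : ℤ) = a')
end

section
/- Let a_m be a positive integer, x an integer multiple of a_m, b_0 = x + a_m, and S a finite set of positive integers all strictly less than a_m. For a ∈ S let u_a be the largest multiple of a in (x, x + a_m]. Define φ(a) = (u_a, u_a + a) if a ∤ b_0; φ(a) = (u_a − 2a, u_a + 2a) if a ∣ b_0, 2a < a_m, and 2a ∤ b_0; and φ(a) = (u_a − a, u_a + a) if a ∣ b_0 and (2a ≥ a_m or 2a ∣ b_0). Then φ is injective on S. -/
/-- Injectivity of the map `φ` in Case 2 of the lower bound: `x` is a multiple of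
`a_m`, `b₀ = x + a_m`, `S` a finite set of positive integers `< a_m`, `u a` is the
largest multiple of `a` in `(x, x + a_m]`, and `φ` is defined by the three-case rule. -/
theorem phi_injective (a_m : ℕ) (ha : 0 < a_m) (x : ℤ) (hx : (a_m : ℤ) ∣ x)
    (b₀ : ℤ) (hb₀ : b₀ = x + a_m)
    (S : Finset ℕ) (hSpos : ∀ a ∈ S, 0 < a) (hSlt : ∀ a ∈ S, a < a_m)
    (u : ℕ → ℤ)
    (hu : ∀ a ∈ S, (a : ℤ) ∣ u a ∧ x < u a ∧ u a ≤ x + a_m ∧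
      ∀ b : ℤ, (a : ℤ) ∣ b → x < b → b ≤ x + a_m → b ≤ u a)
    (φ : ℕ → ℤ × ℤ)
    (hφ1 : ∀ a ∈ S, ¬ (a : ℤ) ∣ b₀ → φ a = (u a, u a + a))
    (hφ2 : ∀ a ∈ S, (a : ℤ) ∣ b₀ → 2 * a < a_m → ¬ ((2 * a : ℤ) ∣ b₀) →
      φ a = (u a - 2 * a, u a + 2 * a))
    (hφ3 : ∀ a ∈ S, (a : ℤ) ∣ b₀ → (a_m ≤ 2 * a ∨ (2 * a : ℤ) ∣ b₀) →
      φ a = (u a - a, u a + a)) :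
    Set.InjOn φ S := by
  -- If a ∣ b₀ then u a = b₀.
  have hub : ∀ t ∈ S, (t : ℤ) ∣ b₀ → u t = b₀ := by
    intro t htS hdvd
    obtain ⟨hd, hlt, hle, hmax⟩ := hu t htS
    have h1 : b₀ ≤ u t := hmax b₀ hdvd (by omega) (by omega)
    omega
  have key : ∀ t ∈ S,
      ((¬ (t : ℤ) ∣ b₀) ∧ φ t = (u t, u t + t)) ∨
      ((t : ℤ) ∣ b₀ ∧ ¬ ((2 * t : ℤ) ∣ b₀) ∧ 2 * t < a_m ∧
        φ t = (b₀ - 2 * t, b₀ + 2 * t)) ∨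
      ((t : ℤ) ∣ b₀ ∧ (a_m ≤ 2 * t ∨ (2 * t : ℤ) ∣ b₀) ∧
        φ t = (b₀ - t, b₀ + t)) := by
    intro t htS
    by_cases h1 : (t : ℤ) ∣ b₀
    · by_cases h2 : (2 * t : ℤ) ∣ b₀
      · exact Or.inr (Or.inr ⟨h1, Or.inr h2,
          by rw [hφ3 t htS h1 (Or.inr h2), hub t htS h1]⟩)
      · by_cases h3 : 2 * t < a_m
        · exact Or.inr (Or.inl ⟨h1, h2, h3,
            by rw [hφ2 t htS h1 h3 h2, hub t htS h1]⟩)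
        · exact Or.inr (Or.inr ⟨h1, Or.inl (by omega),
            by rw [hφ3 t htS h1 (Or.inl (by omega)), hub t htS h1]⟩)
    · exact Or.inl ⟨h1, hφ1 t htS h1⟩
  intro a haS b hbS hEq
  simp only [Finset.coe_mem, Finset.mem_coe] at haS hbS
  have hua := (hu a haS).1
  have hub' := (hu b hbS).1
  have hapos := hSpos a haS
  have hbpos := hSpos b hbS
  have halt := hSlt a haS
  have hblt := hSlt b hbS
  rcases key a haS with ⟨hA, eA⟩ | ⟨hA1, hA2, hA3, eA⟩ | ⟨hA1, hA2, eA⟩ <;>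
    rcases key b hbS with ⟨hB, eB⟩ | ⟨hB1, hB2, hB3, eB⟩ | ⟨hB1, hB2, eB⟩ <;>
    rw [eA, eB] at hEq <;> simp only [Prod.mk.injEq] at hEq <;>
    obtain ⟨h1, h2⟩ := hEq
  -- (1,1)
  · omega
  -- (1,2): a = 4b, a ∣ u a = b₀ - 2b ⇒ 2b ∣ b₀, contradiction
  · exfalso
    rw [h1, show (a : ℤ) = 4 * b by omega] at hua
    have h4 : (2 * (b : ℤ)) ∣ (b₀ - 2 * b) :=
      dvd_trans ⟨2, by ring⟩ hua
    have : (2 * (b : ℤ)) ∣ b₀ := by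
      have := dvd_add h4 (dvd_refl (2 * (b : ℤ)))
      simpa using this
    exact hB2 this
  -- (1,3): a = 2b
  · exfalso
    rw [h1, show (a : ℤ) = 2 * b by omega] at hua
    rcases hB2 with hc | hc
    · -- a_m ≤ 2b, but a = 2b and a < a_m
      omega
    · -- 2b ∣ b₀ and 2b ∣ b₀ - b ⇒ 2b ∣ b, contradiction with b > 0
      have h5 : (2 * (b : ℤ)) ∣ (b : ℤ) := by
        have := dvd_sub hc hua
        simpa using this
      have := Int.le_of_dvd (by exact_mod_cast hbpos) h5
      omega
  -- (2,1): b = 4a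
  · exfalso
    rw [← h1, show (b : ℤ) = 4 * a by omega] at hub'
    have h4 : (2 * (a : ℤ)) ∣ (b₀ - 2 * a) :=
      dvd_trans ⟨2, by ring⟩ hub'
    have : (2 * (a : ℤ)) ∣ b₀ := by
      have := dvd_add h4 (dvd_refl (2 * (a : ℤ)))
      simpa using this
    exact hA2 this
  -- (2,2)
  · omega
  -- (2,3): b = 2a, then b ∣ b₀ contradicts ¬ 2a ∣ b₀
  · exfalso
    apply hA2
    rw [show (2 * (a : ℤ)) = b by omega]
    exact hB1
  -- (3,1): b = 2a
  · exfalso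
    rw [← h1, show (b : ℤ) = 2 * a by omega] at hub'
    rcases hA2 with hc | hc
    · omega
    · have h5 : (2 * (a : ℤ)) ∣ (a : ℤ) := by
        have := dvd_sub hc hub'
        simpa using this
      have := Int.le_of_dvd (by exact_mod_cast hapos) h5
      omega
  -- (3,2): a = 2b
  · exfalso
    apply hB2
    rw [show (2 * (b : ℤ)) = a by omega]
    exact hA1
  -- (3,3)
  · omega
end

section
/- Let a_m be a positive integer, x ∈ a_m ℤ, b_0 = x + a_m, and let a, a' be positive integers less than a_m with a ∤ b_0, a' ∣ b_0, 2a' < a_m, and 2a' ∤ b_0. Then with u the largest multiple of a in (x, x + a_m], the equality (u, u + a) = (b_0 − 2a', b_0 + 2a') is impossible. -/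
/-- No mixed-type collision between a type (T1) element `a` and a type (T2) element
`a'`: with `u` the largest multiple of `a` in `(x, x + a_m]`, the equality
`(u, u + a) = (b₀ - 2a', b₀ + 2a')` is impossible. -/
theorem no_T1_T2_collision (a_m : ℕ) (ha_m : 0 < a_m) (x : ℤ) (hx : (a_m : ℤ) ∣ x)
    (b₀ : ℤ) (hb₀ : b₀ = x + a_m)
    (a a' : ℕ) (ha : 0 < a) (ha' : 0 < a') (haltm : a < a_m) (ha'ltm : a' < a_m)
    (hndvd : ¬ (a : ℤ) ∣ b₀) (hdvd : (a' : ℤ) ∣ b₀)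
    (h2a' : 2 * a' < a_m) (h2ndvd : ¬ ((2 * a' : ℤ) ∣ b₀))
    (u : ℤ) (hu : (a : ℤ) ∣ u ∧ x < u ∧ u ≤ x + a_m ∧
      ∀ b : ℤ, (a : ℤ) ∣ b → x < b → b ≤ x + a_m → b ≤ u) :
    ¬ ((u, u + (a : ℤ)) = (b₀ - 2 * a', b₀ + 2 * a')) := by
  intro h
  have h1 : u = b₀ - 2 * a' := ((Prod.mk.injEq _ _ _ _).mp h).1
  have h2 : u + (a : ℤ) = b₀ + 2 * a' := ((Prod.mk.injEq _ _ _ _).mp h).2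
  have ha4 : (a : ℤ) = 4 * a' := by omega
  have hdu : (a : ℤ) ∣ u := hu.1
  rw [ha4, h1] at hdu
  have h2d : (2 * (a' : ℤ)) ∣ b₀ - 2 * a' := dvd_trans ⟨2, by ring⟩ hdu
  apply h2ndvd
  have : (2 * (a' : ℤ)) ∣ b₀ := by
    have := dvd_add h2d (dvd_refl (2 * (a' : ℤ)))
    simpa using this
  simpa using this
end

section
/- The function f is nondecreasing: for all positive integers m ≤ n, f(m) ≤ f(n). -/
lemma matchprop_mono {m n r : ℕ} (hm : 0 < m) (hmn : m ≤ n) (h : MatchProp m r) :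
    MatchProp n r := by
  intro A hA hpos x
  have hAne : A.Nonempty := Finset.card_pos.mp (hA ▸ lt_of_lt_of_le hm hmn)
  set a := A.max' hAne with ha
  have haA : a ∈ A := A.max'_mem hAne
  have hcard : m - 1 ≤ (A.erase a).card := by
    rw [Finset.card_erase_of_mem haA, hA]; omega
  obtain ⟨t, hts, htc⟩ := Finset.exists_subset_card_eq hcard
  have hat : a ∉ t := fun h' => Finset.notMem_erase a A (hts h')
  set A' := insert a t with hA'
  have hA'sub : A' ⊆ A := Finset.insert_subset haA (hts.trans (Finset.erase_subset _ _))
  have hA'card : A'.card = m := by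
    rw [hA', Finset.card_insert_of_notMem hat, htc]; omega
  have hsup : A'.sup id = A.sup id := by
    apply le_antisymm (Finset.sup_mono hA'sub)
    apply Finset.sup_le
    intro b hb
    exact le_trans (A.le_max' b hb)
      (Finset.le_sup (f := id) (Finset.mem_insert_self a t))
  obtain ⟨c, b, hc, hb, hcond⟩ := h A' hA'card (fun y hy => hpos y (hA'sub hy)) x
  exact ⟨c, b, hc, hb, fun i => by
    obtain ⟨h1, h2, h3, h4⟩ := hcond i
    exact ⟨hA'sub h1, h2, h3, by rwa [hsup] at h4⟩⟩

theorem f_monotone (m n : ℕ) (hm : 0 < m) (hmn : m ≤ n) :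
    f m ≤ f n := by
  have hsub : {r | MatchProp m r} ⊆ {r | MatchProp n r} :=
    fun r hr => matchprop_mono hm hmn hr
  have hne : (0 : ℕ) ∈ {r | MatchProp m r} := by
    intro A hA hpos x
    exact ⟨Fin.elim0, Fin.elim0, Function.injective_of_subsingleton _,
      Function.injective_of_subsingleton _, fun i => i.elim0⟩
  have hbdd : BddAbove {r | MatchProp n r} := by
    refine ⟨n, fun r hr => ?_⟩
    obtain ⟨c, b, hc, hb, hcond⟩ :=
      hr (Finset.Icc 1 n) (by simp) (fun a ha => (Finset.mem_Icc.mp ha).1) 0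
    calc r = (Finset.univ : Finset (Fin r)).card := by simp
      _ ≤ (Finset.Icc 1 n).card :=
        Finset.card_le_card_of_injOn c (fun i _ => (hcond i).1) hc.injOn
      _ = n := by simp
  exact csSup_le_csSup hbdd ⟨0, hne⟩ hsub
end

section
/- If in the definition of f the interval (x, x + 2a_m) is replaced by (x, x + c·a_m) for a fixed real number 1 < c < 2, then the resulting function f_c satisfies f_c(m) = 1 for all positive integers m. -/
/-- The matching property with interval `(x, x + c * max A)`. -/
def MatchPropC (c : ℝ) (m r : ℕ) : Prop :=
  ∀ A : Finset ℕ, A.card = m → (∀ a ∈ A, 0 < a) → ∀ x : ℝ,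
    ∃ cs : Fin r → ℕ, ∃ b : Fin r → ℤ,
      Function.Injective cs ∧ Function.Injective b ∧
      ∀ i : Fin r, cs i ∈ A ∧ (cs i : ℤ) ∣ b i ∧
        x < (b i : ℝ) ∧ (b i : ℝ) < x + c * (A.sup id : ℕ)

/-- `fC c m` is the largest `r` such that `MatchPropC c m r` holds. -/
noncomputable def fC (c : ℝ) (m : ℕ) : ℕ := sSup {r : ℕ | MatchPropC c m r}

lemma matchOne (c : ℝ) (hc1 : 1 < c) (m : ℕ) (hm : 0 < m) : MatchPropC c m 1 := by
  intro A hcard hpos x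
  have hne : A.Nonempty := Finset.card_pos.mp (hcard ▸ hm)
  obtain ⟨a, haA, hsup⟩ := Finset.exists_mem_eq_sup A hne id
  have ha : 0 < a := hpos a haA
  have haR : (0:ℝ) < a := by exact_mod_cast ha
  refine ⟨fun _ => a, fun _ => a * (⌊x / a⌋ + 1), ?_, ?_, ?_⟩
  · intro i j _; exact Subsingleton.elim i j
  · intro i j _; exact Subsingleton.elim i j
  · intro i
    have hfl : (⌊x / a⌋ : ℝ) ≤ x / a := Int.floor_le _
    have hfl2 : x / a < ⌊x / a⌋ + 1 := Int.lt_floor_add_one _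
    have hx : x = (x / a) * a := by field_simp
    refine ⟨haA, ⟨_, rfl⟩, ?_, ?_⟩
    · push_cast
      nlinarith
    · rw [hsup]
      push_cast
      simp only [id]
      nlinarith

lemma notTwo (c : ℝ) (hc1 : 1 < c) (hc2 : c < 2) (m : ℕ) (hm : 0 < m) :
    ¬ MatchPropC c m 2 := by
  intro H
  -- choose M large
  obtain ⟨M, hM⟩ := exists_nat_gt ((c * m - 2) / (2 - c))
  have h2c : (0:ℝ) < 2 - c := by linarith
  have hkey : c * ((M:ℝ) + m) < 2 * ((M:ℝ) + 1) := by
    rw [div_lt_iff₀ h2c] at hM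
    nlinarith
  set A : Finset ℕ := (Finset.range m).image (fun i => M + 1 + i) with hA
  have hcard : A.card = m := by
    rw [hA, Finset.card_image_of_injective _ (fun i j h => by omega), Finset.card_range]
  have hpos : ∀ a ∈ A, 0 < a := by
    intro a haA
    rw [hA, Finset.mem_image] at haA
    obtain ⟨j, _, rfl⟩ := haA
    omega
  have hsup : A.sup id = M + m := by
    apply le_antisymm
    · apply Finset.sup_le
      intro a haA
      rw [hA, Finset.mem_image] at haA
      obtain ⟨j, hj, rfl⟩ := haA
      simp only [id]
      rw [Finset.mem_range] at hj
      omega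
    · have : M + m ∈ A := by
        rw [hA, Finset.mem_image]
        exact ⟨m - 1, Finset.mem_range.mpr (by omega), by omega⟩
      exact Finset.le_sup (f := id) this
  set N : ℕ := ∏ i ∈ Finset.range m, (M + 1 + i) with hN
  obtain ⟨cs, b, hcsi, hbi, hprop⟩ := H A hcard hpos ((N : ℝ) - (M + 1))
  have hbN : ∀ i : Fin 2, b i = (N : ℤ) := by
    intro i
    obtain ⟨hmem, hdvd, hlo, hhi⟩ := hprop i
    rw [hsup] at hhi; push_cast at hhi
    rw [hA, Finset.mem_image] at hmem
    obtain ⟨j, hj, hcsj⟩ := hmem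
    rw [Finset.mem_range] at hj
    have hdvdN : (cs i : ℤ) ∣ (N : ℤ) := by
      have h1 : (M + 1 + j) ∣ N := Finset.dvd_prod_of_mem _ (Finset.mem_range.mpr hj)
      have h2 : cs i ∣ N := hcsj ▸ h1
      exact_mod_cast h2
    have hd : (cs i : ℤ) ∣ (b i - N) := dvd_sub hdvd hdvdN
    have hlo' : (N : ℤ) - (M + 1) < b i := by exact_mod_cast hlo
    have hhi' : b i < (N : ℤ) + (M + 1) := by
      have : (b i : ℝ) < (N : ℝ) + (M + 1) := by
        have : (b i : ℝ) < (N:ℝ) - (M+1) + 2 * ((M:ℝ)+1) := by linarith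
        linarith
      exact_mod_cast this
    have hcslb : (M + 1 : ℤ) ≤ (cs i : ℤ) := by
      have : M + 1 ≤ cs i := by omega
      exact_mod_cast this
    by_contra hne
    have hne0 : b i - (N : ℤ) ≠ 0 := fun h => hne (by omega)
    have := Int.le_of_dvd (abs_pos.mpr hne0) ((dvd_abs _ _).mpr hd)
    have habs : |b i - (N:ℤ)| < M + 1 := abs_lt.mpr ⟨by omega, by omega⟩
    omega
  have : (0 : Fin 2) = 1 := hbi (by rw [hbN 0, hbN 1])
  simp at this

/-- For `1 < c < 2`, `f_c(m) = 1` for all positive integers `m`. -/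
theorem fC_eq_one (c : ℝ) (hc1 : 1 < c) (hc2 : c < 2) (m : ℕ) (hm : 0 < m) :
    fC c m = 1 := by
  have h1 : MatchPropC c m 1 := matchOne c hc1 m hm
  have hub : ∀ r ∈ {r : ℕ | MatchPropC c m r}, r ≤ 1 := by
    intro r hr
    by_contra hgt
    push_neg at hgt
    have h2r : 2 ≤ r := hgt
    apply notTwo c hc1 hc2 m hm
    intro A hcard hpos x
    obtain ⟨cs, b, hcsi, hbi, hprop⟩ := hr A hcard hpos x
    exact ⟨cs ∘ Fin.castLE h2r, b ∘ Fin.castLE h2r,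
      hcsi.comp (Fin.castLE_injective h2r), hbi.comp (Fin.castLE_injective h2r),
      fun i => hprop _⟩
  apply le_antisymm
  · exact csSup_le ⟨1, h1⟩ hub
  · exact le_csSup ⟨1, hub⟩ h1
end
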